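/- arXiv:2501.11917 — 5 statements merged into one kernel-verified Lean document; each statement's English description precedes it below -/
import Mathlib

section
/- Let W be a group, η a character of W, and φ a semisimple complex representation of W of dimension 2n all of whose irreducible summands have dimension at most 2. If φ carries a nondegenerate η-twisted symplectic form, then φ decomposes as a direct sum ⊕_{i=1}^{a} φ_i ⊕ ⊕_{j=a+1}^{b} (φ_j ⊕ φ_j^∨ ⊗ η), where each φ_i (1 ≤ i ≤ a) is a 2-dimensional irreducible representation carrying a nondegenerate η-twisted symplectic form, and each φ_j (a+1 ≤ j ≤ b) is irreducible and carries no such form. -/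
/-- An `η`-twisted symplectic form on the invariant subspace `p` of a representation `φ`:
a bilinear form on `V` which, restricted to `p`, is alternating, nondegenerate, and
`η`-twisted equivariant. -/
def HasTwistedSymplecticFormOn {W : Type*} [Group W] {V : Type*} [AddCommGroup V]
    [Module ℂ V] (φ : Representation ℂ W V) (η : W →* ℂˣ) (p : Submodule ℂ V) : Prop :=
  ∃ B : V →ₗ[ℂ] V →ₗ[ℂ] ℂ,
    (∀ v ∈ p, B v v = 0) ∧
    (∀ v ∈ p, (∀ u ∈ p, B v u = 0) → v = 0) ∧
    (∀ w : W, ∀ u ∈ p, ∀ v ∈ p, B (φ w u) (φ w v) = (η w : ℂ) * B u v)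

/-!
Induct on nondegenerate invariant subspaces `N`. If some irreducible `U ≤ N` is nondegenerate,
it is `2`-dimensional (an alternating form on a line vanishes), carries `B|U`, and
`N = U ⊕ (U^⊥ ∩ N)`. Otherwise every irreducible subspace of `N` is isotropic, its radical being
invariant. Pick one, `U`: an irreducible `U'` in an invariant complement of `U^⊥ ∩ N` pairs
perfectly with `U`, so `U ⊕ U'` is nondegenerate, `U' ≅ U^∨ ⊗ η`, and we split off `U ⊕ U'`.
Finally `U` carries no twisted symplectic form `B'`: the graph of the isomorphism `U ≅ U'`
induced by `B'` is irreducible, yet `B` restricts to `2 B'` on it.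
-/

open Module Function

section Lattice

variable {α ι κ : Type*} [CompleteLattice α]

theorem Disjoint.sup_sup_sup_comm [IsModularLattice α] {a b c d : α} (hab : Disjoint a b)
    (hcd : Disjoint c d) (h : Disjoint (a ⊔ b) (c ⊔ d)) : Disjoint (a ⊔ c) (b ⊔ d) := by
  have hc : Disjoint c (b ⊔ d) :=
    (hcd.disjoint_sup_right_of_disjoint_sup_left h.symm).mono_right
      (sup_le (le_sup_of_le_right le_sup_right) le_sup_left)
  have ha : Disjoint a (c ⊔ (b ⊔ d)) := by
    rw [sup_left_comm]
    exact hab.disjoint_sup_right_of_disjoint_sup_left h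
  exact hc.disjoint_sup_left_of_disjoint_sup_right ha

theorem iSup_sumElim (f : ι → α) (g : κ → α) :
    ⨆ x, Sum.elim f g x = (⨆ i, f i) ⊔ ⨆ j, g j :=
  iSup_sum

theorem iSup_fin_cons {n : ℕ} (x : α) (f : Fin n → α) :
    ⨆ i, (Fin.cons x f : Fin (n + 1) → α) i = x ⊔ ⨆ i, f i := by
  simp [← (finSuccEquiv n).symm.iSup_comp, iSup_option]

theorem iSupIndep_fin_cons_iff [IsModularLattice α] {n : ℕ} {x : α} {f : Fin n → α} :
    iSupIndep (Fin.cons x f : Fin (n + 1) → α) ↔ Disjoint x (⨆ i, f i) ∧ iSupIndep f := by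
  refine ⟨fun h ↦ ⟨(h 0).mono_right ?_, h.comp (Fin.succ_injective n)⟩, fun ⟨hx, hf⟩ ↦ ?_⟩
  · exact iSup_le fun i ↦ le_iSup₂_of_le i.succ (Fin.succ_ne_zero i) le_rfl
  rw [iSupIndep_def]
  refine Fin.cases (hx.mono_right ?_) fun i ↦ ?_
  · refine iSup₂_le fun j hj ↦ ?_
    obtain ⟨j, rfl⟩ := Fin.exists_succ_eq.mpr hj
    exact le_iSup f j
  · have hsplit : Disjoint (f i ⊔ ⨆ (j) (_ : j ≠ i), f j) x := by
      rw [← iSup_split_single]; exact hx.symm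
    refine ((hf i).disjoint_sup_right_of_disjoint_sup_left hsplit).mono_right
      (iSup₂_le fun j hj ↦ ?_)
    induction j using Fin.cases with
    | zero => exact le_sup_right
    | succ j => exact le_sup_of_le_left (le_iSup₂_of_le j (by simpa using hj) le_rfl)

theorem iSupIndep_sumElim_iff [IsModularLattice α] [IsCompactlyGenerated α]
    {f : ι → α} {g : κ → α} :
    iSupIndep (Sum.elim f g) ↔
      iSupIndep f ∧ iSupIndep g ∧ Disjoint (⨆ i, f i) (⨆ j, g j) := by
  refine ⟨fun h ↦ ⟨h.comp Sum.inl_injective, h.comp Sum.inr_injective, ?_⟩,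
    fun ⟨hf, hg, hfg⟩ ↦ ?_⟩
  · have := h.disjoint_biSup_biSup Set.isCompl_range_inl_range_inr.disjoint
    rwa [iSup_range, iSup_range] at this
  rw [iSupIndep_def, Sum.forall]
  constructor
  · intro i
    have hsplit : Disjoint (f i ⊔ ⨆ (j) (_ : j ≠ i), f j) (⨆ j, g j) := by
      rwa [← iSup_split_single]
    refine ((hf i).disjoint_sup_right_of_disjoint_sup_left hsplit).mono_right
      (iSup₂_le ?_)
    rintro (j | j) hj
    · exact le_sup_of_le_left (le_iSup₂_of_le j (by simpa using hj) le_rfl)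
    · exact le_sup_of_le_right (le_iSup g j)
  · intro i
    have hsplit : Disjoint (g i ⊔ ⨆ (j) (_ : j ≠ i), g j) (⨆ j, f j) := by
      rw [← iSup_split_single]; exact hfg.symm
    refine ((hg i).disjoint_sup_right_of_disjoint_sup_left hsplit).mono_right
      (iSup₂_le ?_)
    rintro (j | j) hj
    · exact le_sup_of_le_right (le_iSup f j)
    · exact le_sup_of_le_left (le_iSup₂_of_le j (by simpa using hj) le_rfl)

end Lattice

namespace Representation

variable {K W V : Type*} [Field K] [Group W] [AddCommGroup V] [Module K V]
  {ρ : Representation K W V}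

theorem mem_invtSubmodule_iff_forall_mem {p : Submodule K V} :
    p ∈ ρ.invtSubmodule ↔ ∀ g, ∀ v ∈ p, ρ g v ∈ p := by
  simp [mem_invtSubmodule, Module.End.mem_invtSubmodule_iff_forall_mem_of_mem]

variable (ρ) in
def IsIrreducibleSubmodule (p : Submodule K V) : Prop :=
  Minimal (fun q ↦ q ∈ ρ.invtSubmodule ∧ q ≠ ⊥) p

namespace IsIrreducibleSubmodule

variable {p : Submodule K V}

theorem mem_invtSubmodule (hp : ρ.IsIrreducibleSubmodule p) : p ∈ ρ.invtSubmodule := hp.prop.1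

theorem ne_bot (hp : ρ.IsIrreducibleSubmodule p) : p ≠ ⊥ := hp.prop.2

theorem eq_bot_or_eq (hp : ρ.IsIrreducibleSubmodule p) {q : Submodule K V} (hqp : q ≤ p)
    (hq : q ∈ ρ.invtSubmodule) : q = ⊥ ∨ q = p :=
  or_iff_not_imp_left.mpr fun hq₀ ↦ le_antisymm hqp (hp.2 ⟨hq, hq₀⟩ hqp)

theorem map (hp : ρ.IsIrreducibleSubmodule p) (g : V →ₗ[K] V)
    (hg : ∀ w, ∀ v ∈ p, g (ρ w v) = ρ w (g v)) (hinj : Disjoint p (LinearMap.ker g)) :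
    ρ.IsIrreducibleSubmodule (p.map g) := by
  have hpinv := mem_invtSubmodule_iff_forall_mem.mp hp.mem_invtSubmodule
  refine ⟨⟨mem_invtSubmodule_iff_forall_mem.mpr ?_, ?_⟩, fun q ⟨hq, hq₀⟩ hqg ↦ ?_⟩
  · rintro w _ ⟨v, hv, rfl⟩
    exact ⟨ρ w v, hpinv w v hv, hg w v hv⟩
  · rw [Ne, ← LinearMap.le_ker_iff_map]
    exact fun h ↦ hp.ne_bot (hinj.eq_bot_of_le h)
  · have hq₀' : p ⊓ q.comap g ≠ ⊥ := by
      obtain ⟨_, hxq, hx₀⟩ := q.ne_bot_iff.mp hq₀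
      obtain ⟨x, hx, rfl⟩ := hqg hxq
      exact (Submodule.ne_bot_iff _).mpr ⟨x, ⟨hx, hxq⟩, fun h ↦ hx₀ (by simp [h])⟩
    have hqinv : p ⊓ q.comap g ∈ ρ.invtSubmodule := by
      refine mem_invtSubmodule_iff_forall_mem.mpr fun w v ⟨hv, hvq⟩ ↦ ⟨hpinv w v hv, ?_⟩
      simpa [hg w v hv] using mem_invtSubmodule_iff_forall_mem.mp hq w _ hvq
    rw [Submodule.map_le_iff_le_comap]
    exact (hp.2 ⟨hqinv, hq₀'⟩ inf_le_left).trans inf_le_right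

end IsIrreducibleSubmodule

theorem exists_isIrreducibleSubmodule_le [FiniteDimensional K V] {p : Submodule K V}
    (hp : p ∈ ρ.invtSubmodule) (hp₀ : p ≠ ⊥) : ∃ q ≤ p, ρ.IsIrreducibleSubmodule q :=
  exists_minimal_le_of_wellFoundedLT _ p ⟨hp, hp₀⟩

theorem isIrreducibleSubmodule_iff {p : Submodule K V} :
    ρ.IsIrreducibleSubmodule p ↔ (∀ w, ∀ v ∈ p, ρ w v ∈ p) ∧ p ≠ ⊥ ∧
      ∀ q ≤ p, (∀ w, ∀ v ∈ q, ρ w v ∈ q) → q = ⊥ ∨ q = p := by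
  simp only [← mem_invtSubmodule_iff_forall_mem]
  refine ⟨fun hp ↦ ⟨hp.mem_invtSubmodule, hp.ne_bot, fun q ↦ hp.eq_bot_or_eq⟩,
    fun ⟨hp, hp₀, h⟩ ↦ ⟨⟨hp, hp₀⟩, fun q ⟨hq, hq₀⟩ hqp ↦ ?_⟩⟩
  exact ((h q hqp hq).resolve_left hq₀).ge

/-- `ι` identifies `U^∨ ⊗ η` with the subrepresentation `U'`. -/
def IsTwistedDual (ρ : Representation K W V) (η : W →* Kˣ) {U : Submodule K V}
    (hU : U ∈ ρ.invtSubmodule) (U' : Submodule K V) : Prop :=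
  ∃ ι : Module.Dual K U →ₗ[K] V, Injective ι ∧ LinearMap.range ι = U' ∧
    ∀ (w : W) (f : Module.Dual K U), ρ w (ι f) =
      ι ((η w : K) • (f ∘ₗ (ρ w⁻¹).restrict (mem_invtSubmodule_iff_forall_mem.mp hU w⁻¹)))

end Representation

open LinearMap (BilinForm)

namespace LinearMap.BilinForm

open Representation

variable {K W V : Type*} [Field K] [Group W] [AddCommGroup V] [Module K V]
  {ρ : Representation K W V} {η : W →* Kˣ} {B : BilinForm K V} {M N U U' : Submodule K V}

def IsTwistedInvariant (B : BilinForm K V) (ρ : Representation K W V) (η : W →* Kˣ) : Prop :=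
  ∀ w u v, B (ρ w u) (ρ w v) = (η w : K) * B u v

theorem IsTwistedInvariant.apply_inv (hB : B.IsTwistedInvariant ρ η) (w : W) (u v : V) :
    B u (ρ w v) = (η w : K) * B (ρ w⁻¹ u) v := by
  rw [← hB, self_inv_apply]

theorem IsTwistedInvariant.orthogonal_mem_invtSubmodule (hB : B.IsTwistedInvariant ρ η)
    (hM : M ∈ ρ.invtSubmodule) : B.orthogonal M ∈ ρ.invtSubmodule := by
  refine mem_invtSubmodule_iff_forall_mem.mpr fun w v hv ↦ mem_orthogonal_iff.mpr fun m hm ↦ ?_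
  rw [hB.apply_inv, mem_orthogonal_iff.mp hv _ (mem_invtSubmodule_iff_forall_mem.mp hM _ m hm),
    mul_zero]

theorem le_orthogonal_comm (hB : B.IsRefl) : U ≤ B.orthogonal U' ↔ U' ≤ B.orthogonal U :=
  ⟨fun h ↦ (le_orthogonal_orthogonal hB).trans (orthogonal_le h),
    fun h ↦ (le_orthogonal_orthogonal hB).trans (orthogonal_le h)⟩

theorem eq_of_forall_apply_eq (h : Disjoint U' (B.orthogonal U)) {x x' : V} (hx : x ∈ U')
    (hx' : x' ∈ U') (hxx' : ∀ y ∈ U, B y x = B y x') : x = x' := by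
  rw [← sub_eq_zero]
  exact Submodule.disjoint_def.mp h _ (sub_mem hx hx')
    (mem_orthogonal_iff.mpr fun y hy ↦ by rw [map_sub, hxx' y hy, sub_self])

variable [FiniteDimensional K V]

theorem restrict_nondegenerate_iff_disjoint (hB : B.IsRefl) :
    (B.restrict M).Nondegenerate ↔ Disjoint M (B.orthogonal M) :=
  (restrict_nondegenerate_iff_isCompl_orthogonal hB).trans (isCompl_orthogonal_iff_disjoint hB)

theorem restrict_nondegenerate_iff_forall (hB : B.IsRefl) :
    (B.restrict M).Nondegenerate ↔ ∀ v ∈ M, (∀ u ∈ M, B v u = 0) → v = 0 := by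
  simp only [restrict_nondegenerate_iff_disjoint hB, Submodule.disjoint_def, mem_orthogonal_iff]
  exact forall₂_congr fun v _ ↦ by simp only [hB.eq_iff]

theorem restrict_nondegenerate_or_le_orthogonal (hB : B.IsRefl) (hBρ : B.IsTwistedInvariant ρ η)
    (hU : ρ.IsIrreducibleSubmodule U) :
    (B.restrict U).Nondegenerate ∨ U ≤ B.orthogonal U := by
  rw [restrict_nondegenerate_iff_disjoint hB, disjoint_iff, ← inf_eq_left]
  exact hU.eq_bot_or_eq inf_le_left
    (ρ.invtSubmodule.inf_mem hU.mem_invtSubmodule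
      (hBρ.orthogonal_mem_invtSubmodule hU.mem_invtSubmodule))

theorem finrank_ne_one_of_restrict_nondegenerate (hB : B.IsAlt)
    (hM : (B.restrict M).Nondegenerate) : finrank K M ≠ 1 := by
  intro h
  obtain ⟨v, hv, hspan⟩ := finrank_eq_one_iff'.mp h
  refine hv (hM.1 v fun u ↦ ?_)
  obtain ⟨c, rfl⟩ := hspan u
  simp [hB.self_eq_zero]

theorem disjoint_inf_orthogonal (hB : B.IsRefl) (hM : (B.restrict M).Nondegenerate) :
    Disjoint M (N ⊓ B.orthogonal M) :=
  ((restrict_nondegenerate_iff_disjoint hB).mp hM).mono_right inf_le_right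

theorem sup_inf_orthogonal_eq (hB : B.IsRefl) (hM : (B.restrict M).Nondegenerate)
    (hMN : M ≤ N) : M ⊔ N ⊓ B.orthogonal M = N := by
  rw [inf_comm, ← sup_inf_assoc_of_le _ hMN,
    (isCompl_orthogonal_of_restrict_nondegenerate hB hM).sup_eq_top, top_inf_eq]

theorem restrict_inf_orthogonal_nondegenerate (hB : B.IsRefl) (hM : (B.restrict M).Nondegenerate)
    (hN : (B.restrict N).Nondegenerate) (hMN : M ≤ N) :
    (B.restrict (N ⊓ B.orthogonal M)).Nondegenerate := by
  rw [restrict_nondegenerate_iff_disjoint hB] at hN ⊢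
  refine Submodule.disjoint_def.mpr fun v ⟨hvN, hvM⟩ hv ↦
    Submodule.disjoint_def.mp hN v hvN (mem_orthogonal_iff.mpr fun n hn ↦ ?_)
  rw [← sup_inf_orthogonal_eq hB hM hMN] at hn
  obtain ⟨m, hm, n', hn', rfl⟩ := Submodule.mem_sup.mp hn
  rw [map_add, LinearMap.add_apply, mem_orthogonal_iff.mp hvM m hm,
    mem_orthogonal_iff.mp hv n' hn', add_zero]

theorem finrank_le_of_disjoint_orthogonal (h : Disjoint U' (B.orthogonal U)) :
    finrank K U' ≤ finrank K U := by
  have h₁ := Submodule.finrank_sup_add_finrank_inf_eq U' (B.orthogonal U)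
  have h₂ := finrank_add_finrank_orthogonal' (B := B) U
  rw [h.eq_bot, finrank_bot] at h₁
  have := Submodule.finrank_le (U' ⊔ B.orthogonal U)
  omega

theorem exists_dual_embedding (h₁ : Disjoint U' (B.orthogonal U))
    (h₂ : Disjoint U (B.orthogonal U')) :
    ∃ ι : Module.Dual K U →ₗ[K] V, Injective ι ∧ LinearMap.range ι = U' ∧
      ∀ f, ∀ y (hy : y ∈ U), B y (ι f) = f ⟨y, hy⟩ := by
  let e : U' →ₗ[K] Module.Dual K U := (B.domRestrict₁₂ U U').flip
  have he : Injective e := (injective_iff_map_eq_zero e).mpr fun x hx ↦ Subtype.ext <|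
    Submodule.disjoint_def.mp h₁ x x.2
      (mem_orthogonal_iff.mpr fun y hy ↦ LinearMap.congr_fun hx ⟨y, hy⟩)
  have hdim : finrank K U' = finrank K (Module.Dual K U) := by
    rw [Subspace.dual_finrank_eq]
    exact (finrank_le_of_disjoint_orthogonal h₁).antisymm (finrank_le_of_disjoint_orthogonal h₂)
  let E := LinearMap.linearEquivOfInjective e he hdim
  refine ⟨U'.subtype ∘ₗ E.symm.toLinearMap, U'.injective_subtype.comp E.symm.injective,
    by simp [LinearMap.range_comp], fun f y hy ↦ ?_⟩
  exact LinearMap.congr_fun (E.apply_symm_apply f) ⟨y, hy⟩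

theorem isTwistedDual_of_disjoint (hBρ : B.IsTwistedInvariant ρ η)
    (hU : U ∈ ρ.invtSubmodule) (hU' : U' ∈ ρ.invtSubmodule)
    (h₁ : Disjoint U' (B.orthogonal U)) (h₂ : Disjoint U (B.orthogonal U')) :
    ρ.IsTwistedDual η hU U' := by
  obtain ⟨ι, hι, hrange, hpair⟩ := exists_dual_embedding h₁ h₂
  have hmem : ∀ f, ι f ∈ U' := fun f ↦ hrange ▸ LinearMap.mem_range_self ι f
  refine ⟨ι, hι, hrange, fun w f ↦ eq_of_forall_apply_eq h₁
    (mem_invtSubmodule_iff_forall_mem.mp hU' w _ (hmem f)) (hmem _) fun y hy ↦ ?_⟩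
  rw [hBρ.apply_inv, hpair f _ (mem_invtSubmodule_iff_forall_mem.mp hU w⁻¹ y hy), hpair _ y hy]
  rfl

theorem exists_equivariant_map_of_pairing (hBρ : B.IsTwistedInvariant ρ η)
    (hU : U ∈ ρ.invtSubmodule) (hU' : U' ∈ ρ.invtSubmodule)
    (h₁ : Disjoint U' (B.orthogonal U)) (h₂ : Disjoint U (B.orthogonal U')) (B' : BilinForm K V)
    (hB'ρ : ∀ w, ∀ u ∈ U, ∀ v ∈ U, B' (ρ w u) (ρ w v) = (η w : K) * B' u v) :
    ∃ χ : V →ₗ[K] V, (∀ v, χ v ∈ U') ∧ (∀ y ∈ U, ∀ v, B y (χ v) = B' y v) ∧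
      ∀ w, ∀ v ∈ U, χ (ρ w v) = ρ w (χ v) := by
  have hUinv := mem_invtSubmodule_iff_forall_mem.mp hU
  obtain ⟨ι, -, hrange, hpair⟩ := exists_dual_embedding h₁ h₂
  let χ : V →ₗ[K] V := ι ∘ₗ (B'.domRestrict U).flip
  have hχU' : ∀ v, χ v ∈ U' := fun v ↦ hrange ▸ LinearMap.mem_range_self ι _
  have hχ : ∀ y ∈ U, ∀ v, B y (χ v) = B' y v := fun y hy v ↦ hpair _ y hy
  refine ⟨χ, hχU', hχ, fun w v hv ↦ eq_of_forall_apply_eq h₁ (hχU' _)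
    (mem_invtSubmodule_iff_forall_mem.mp hU' w _ (hχU' v)) fun y hy ↦ ?_⟩
  rw [hχ y hy, hBρ.apply_inv, hχ _ (hUinv w⁻¹ y hy), ← hB'ρ w _ (hUinv w⁻¹ y hy) v hv,
    self_inv_apply]

theorem exists_dual_partner (hB : B.IsRefl) (hBρ : B.IsTwistedInvariant ρ η)
    (hss : ∀ q ∈ ρ.invtSubmodule, ∃ q' ∈ ρ.invtSubmodule, IsCompl q q')
    (hN : N ∈ ρ.invtSubmodule) (hNnd : (B.restrict N).Nondegenerate) (hUN : U ≤ N)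
    (hU : ρ.IsIrreducibleSubmodule U) :
    ∃ U' ≤ N, ρ.IsIrreducibleSubmodule U' ∧ Disjoint U' (B.orthogonal U) ∧
      Disjoint U (B.orthogonal U') := by
  have hUorth := hBρ.orthogonal_mem_invtSubmodule hU.mem_invtSubmodule
  obtain ⟨q, hq, hcompl⟩ := hss _ (ρ.invtSubmodule.inf_mem hN hUorth)
  have hC : q ⊓ N ≠ ⊥ := by
    intro hC
    have hN' := sup_inf_assoc_of_le q (inf_le_left : N ⊓ B.orthogonal U ≤ N)
    rw [hcompl.sup_eq_top, top_inf_eq, hC, sup_bot_eq] at hN'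
    have hUN' : U ≤ B.orthogonal N := (le_orthogonal_comm hB).mpr (hN' ▸ inf_le_right)
    exact hU.ne_bot (disjoint_self.mp
      (((restrict_nondegenerate_iff_disjoint hB).mp hNnd).mono hUN hUN'))
  obtain ⟨U', hU'C, hU'⟩ := exists_isIrreducibleSubmodule_le (ρ.invtSubmodule.inf_mem hq hN) hC
  have h₁ : Disjoint U' (B.orthogonal U) := Submodule.disjoint_def.mpr fun x hx hxU ↦
    Submodule.disjoint_def.mp hcompl.disjoint x ⟨(hU'C hx).2, hxU⟩ (hU'C hx).1
  refine ⟨U', hU'C.trans inf_le_right, hU', h₁, disjoint_iff.mpr ?_⟩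
  refine (hU.eq_bot_or_eq inf_le_left (ρ.invtSubmodule.inf_mem hU.mem_invtSubmodule
    (hBρ.orthogonal_mem_invtSubmodule hU'.mem_invtSubmodule))).resolve_right fun h ↦ ?_
  have hU'U : U' ≤ B.orthogonal U := (le_orthogonal_comm hB).mp (inf_eq_left.mp h)
  exact hU'.ne_bot (disjoint_self.mp (h₁.mono_right hU'U))

theorem restrict_sup_nondegenerate (hB : B.IsRefl) (hU : U ≤ B.orthogonal U)
    (h₁ : Disjoint U' (B.orthogonal U)) (h₂ : Disjoint U (B.orthogonal U')) :
    (B.restrict (U ⊔ U')).Nondegenerate := by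
  rw [restrict_nondegenerate_iff_disjoint hB]
  refine Submodule.disjoint_def.mpr fun v hv hvo ↦ ?_
  obtain ⟨u, hu, x, hx, rfl⟩ := Submodule.mem_sup.mp hv
  have hx₀ : x = 0 := Submodule.disjoint_def.mp h₁ x hx (mem_orthogonal_iff.mpr fun y hy ↦ by
    simpa [mem_orthogonal_iff.mp (hU hu) y hy] using
      mem_orthogonal_iff.mp hvo y (Submodule.mem_sup_left hy))
  subst hx₀
  rw [add_zero] at hvo ⊢
  exact Submodule.disjoint_def.mp h₂ u hu (mem_orthogonal_iff.mpr fun y hy ↦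
    mem_orthogonal_iff.mp hvo y (Submodule.mem_sup_right hy))

end LinearMap.BilinForm

section Decomposition

open Representation LinearMap.BilinForm

variable {W V : Type*} [Group W] [AddCommGroup V] [Module ℂ V]
  {η : W →* ℂˣ} {φ : Representation ℂ W V} {B : LinearMap.BilinForm ℂ V} {U U' N : Submodule ℂ V}

theorem not_hasTwistedSymplecticFormOn [FiniteDimensional ℂ V] (hB : B.IsAlt)
    (hBφ : B.IsTwistedInvariant φ η) (hU : φ.IsIrreducibleSubmodule U)
    (hU' : U' ∈ φ.invtSubmodule) (hUiso : U ≤ B.orthogonal U) (hU'iso : U' ≤ B.orthogonal U')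
    (h₁ : Disjoint U' (B.orthogonal U)) (h₂ : Disjoint U (B.orthogonal U'))
    (hiso : ∀ G ≤ U ⊔ U', φ.IsIrreducibleSubmodule G → G ≤ B.orthogonal G) :
    ¬ HasTwistedSymplecticFormOn φ η U := by
  rintro ⟨B', hB'alt, hB'nd, hB'φ⟩
  have hB'skew : ∀ u ∈ U, ∀ v ∈ U, -B' u v = B' v u := fun u hu v hv ↦
    LinearMap.IsAlt.neg (B := LinearMap.BilinForm.restrict B' U) (fun x ↦ hB'alt x x.2)
      ⟨u, hu⟩ ⟨v, hv⟩
  obtain ⟨χ, hχU', hχ, hχφ⟩ :=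
    exists_equivariant_map_of_pairing hBφ hU.mem_invtSubmodule hU' h₁ h₂ B' hB'φ
  let g : V →ₗ[ℂ] V := LinearMap.id + χ
  have hker : Disjoint U (LinearMap.ker g) := Submodule.disjoint_def.mpr fun v hv hgv ↦ by
    have hv' : v = -χ v := eq_neg_of_add_eq_zero_left hgv
    exact Submodule.disjoint_def.mp (h₁.mono_right hUiso).symm v hv (hv' ▸ neg_mem (hχU' v))
  have hGiso := hiso _ (Submodule.map_le_iff_le_comap.mpr fun v hv ↦
    Submodule.add_mem_sup hv (hχU' v)) (hU.map g (fun w v hv ↦ by simp [g, hχφ w v hv]) hker)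
  have hB'0 : ∀ u ∈ U, ∀ v ∈ U, B' u v = 0 := by
    intro u hu v hv
    have h0 := mem_orthogonal_iff.mp (hGiso (Submodule.mem_map_of_mem hv)) _
      (Submodule.mem_map_of_mem hu)
    have hχuv : B (χ u) v = B' u v := by
      rw [← LinearMap.IsAlt.neg hB v (χ u), hχ v hv u, ← hB'skew u hu v hv, neg_neg]
    simp only [g, LinearMap.add_apply, LinearMap.id_apply, map_add, hχ u hu, hχuv,
      mem_orthogonal_iff.mp (hUiso hv) u hu,
      mem_orthogonal_iff.mp (hU'iso (hχU' v)) _ (hχU' u)] at h0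
    linear_combination h0 / 2
  obtain ⟨u, hu, hu₀⟩ := U.ne_bot_iff.mp hU.ne_bot
  exact hu₀ (hB'nd u hu fun v hv ↦ hB'0 u hu v hv)

def IsSymplecticTypeDecomposition (η : W →* ℂˣ) (φ : Representation ℂ W V)
    (N : Submodule ℂ V) : Prop :=
  ∃ (a c : ℕ) (P : Fin a → Submodule ℂ V) (Q R : Fin c → Submodule ℂ V),
    iSupIndep (Sum.elim P (Sum.elim Q R)) ∧ iSup (Sum.elim P (Sum.elim Q R)) = N ∧
    (∀ i, φ.IsIrreducibleSubmodule (P i) ∧ finrank ℂ (P i) = 2 ∧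
      HasTwistedSymplecticFormOn φ η (P i)) ∧
    ∃ hQ : ∀ j, φ.IsIrreducibleSubmodule (Q j), ∀ j,
      ¬ HasTwistedSymplecticFormOn φ η (Q j) ∧ R j ∈ φ.invtSubmodule ∧
        φ.IsTwistedDual η (hQ j).mem_invtSubmodule (R j)

theorem isSymplecticTypeDecomposition_bot : IsSymplecticTypeDecomposition η φ ⊥ :=
  ⟨0, 0, Fin.elim0, Fin.elim0, Fin.elim0, iSupIndep_subsingleton _, iSup_of_empty _,
    fun i ↦ i.elim0, fun j ↦ j.elim0, fun j ↦ j.elim0⟩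

theorem IsSymplecticTypeDecomposition.sup_symplectic (h : IsSymplecticTypeDecomposition η φ N)
    (hUN : Disjoint U N) (hU : φ.IsIrreducibleSubmodule U) (hU2 : finrank ℂ U = 2)
    (hUform : HasTwistedSymplecticFormOn φ η U) :
    IsSymplecticTypeDecomposition η φ (U ⊔ N) := by
  obtain ⟨a, c, P, Q, R, hind, hsup, hP, hQR⟩ := h
  rw [iSup_sumElim] at hsup
  rw [iSupIndep_sumElim_iff] at hind
  rw [← hsup] at hUN ⊢
  refine ⟨a + 1, c, Fin.cons U P, Q, R, ?_, ?_, Fin.cases ⟨hU, hU2, hUform⟩ hP, hQR⟩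
  · rw [iSupIndep_sumElim_iff, iSupIndep_fin_cons_iff, iSup_fin_cons]
    exact ⟨⟨hUN.mono_right le_sup_left, hind.1⟩, hind.2.1,
      hind.2.2.disjoint_sup_left_of_disjoint_sup_right hUN⟩
  · rw [iSup_sumElim, iSup_fin_cons, sup_assoc]

theorem IsSymplecticTypeDecomposition.sup_dualPair (h : IsSymplecticTypeDecomposition η φ N)
    (hUU' : Disjoint U U') (hUN : Disjoint (U ⊔ U') N) (hU : φ.IsIrreducibleSubmodule U)
    (hUform : ¬ HasTwistedSymplecticFormOn φ η U) (hU' : U' ∈ φ.invtSubmodule)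
    (hdual : φ.IsTwistedDual η hU.mem_invtSubmodule U') :
    IsSymplecticTypeDecomposition η φ (U ⊔ U' ⊔ N) := by
  obtain ⟨a, c, P, Q, R, hind, hsup, hP, hQ, hQR⟩ := h
  simp only [iSup_sumElim] at hsup
  simp only [iSupIndep_sumElim_iff, iSup_sumElim] at hind
  obtain ⟨hPind, ⟨hQind, hRind, hQdR⟩, hPdQR⟩ := hind
  rw [← hsup] at hUN ⊢
  refine ⟨a, c + 1, P, Fin.cons U Q, Fin.cons U' R, ?_, ?_, hP, Fin.cases hU hQ,
    Fin.cases ⟨hUform, hU', hdual⟩ hQR⟩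
  · simp only [iSupIndep_sumElim_iff, iSupIndep_fin_cons_iff, iSup_sumElim, iSup_fin_cons]
    have hUN' := hUN.mono_right (le_sup_right : _ ≤ (⨆ i, P i) ⊔ _)
    refine ⟨hPind, ⟨⟨hUN'.mono le_sup_left le_sup_left, hQind⟩,
      ⟨hUN'.mono le_sup_right le_sup_right, hRind⟩, hUU'.sup_sup_sup_comm hQdR hUN'⟩, ?_⟩
    rw [← sup_sup_sup_comm, sup_comm]
    exact hPdQR.disjoint_sup_right_of_disjoint_sup_left hUN.symm
  · simp only [iSup_sumElim, iSup_fin_cons]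
    ac_rfl

theorem IsSymplecticTypeDecomposition.of_inf_orthogonal_symplectic [FiniteDimensional ℂ V]
    (hdim2 : ∀ p, φ.IsIrreducibleSubmodule p → finrank ℂ p ≤ 2) (hB : B.IsAlt)
    (hBφ : B.IsTwistedInvariant φ η) (hUN : U ≤ N) (hU : φ.IsIrreducibleSubmodule U)
    (hUnd : (B.restrict U).Nondegenerate)
    (h : IsSymplecticTypeDecomposition η φ (N ⊓ B.orthogonal U)) :
    IsSymplecticTypeDecomposition η φ N := by
  have hU2 : finrank ℂ U = 2 := by
    have h₀ : finrank ℂ U ≠ 0 := Submodule.finrank_eq_zero.not.mpr hU.ne_bot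
    have h₁ := finrank_ne_one_of_restrict_nondegenerate hB hUnd
    have h₂ := hdim2 U hU
    omega
  rw [← sup_inf_orthogonal_eq hB.isRefl hUnd hUN]
  exact h.sup_symplectic (disjoint_inf_orthogonal hB.isRefl hUnd) hU hU2
    ⟨B, fun v _ ↦ hB v, (restrict_nondegenerate_iff_forall hB.isRefl).mp hUnd,
      fun w u _ v _ ↦ hBφ w u v⟩

theorem IsSymplecticTypeDecomposition.of_inf_orthogonal_dualPair [FiniteDimensional ℂ V]
    (hB : B.IsAlt) (hBφ : B.IsTwistedInvariant φ η)
    (hiso : ∀ G ≤ N, φ.IsIrreducibleSubmodule G → G ≤ B.orthogonal G)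
    (hUN : U ≤ N) (hU'N : U' ≤ N) (hU : φ.IsIrreducibleSubmodule U)
    (hU' : φ.IsIrreducibleSubmodule U') (h₁ : Disjoint U' (B.orthogonal U))
    (h₂ : Disjoint U (B.orthogonal U'))
    (h : IsSymplecticTypeDecomposition η φ (N ⊓ B.orthogonal (U ⊔ U'))) :
    IsSymplecticTypeDecomposition η φ N := by
  have hUiso := hiso U hUN hU
  have hMN : U ⊔ U' ≤ N := sup_le hUN hU'N
  have hMnd := restrict_sup_nondegenerate hB.isRefl hUiso h₁ h₂
  rw [← sup_inf_orthogonal_eq hB.isRefl hMnd hMN]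
  refine h.sup_dualPair (h₁.mono_right hUiso).symm (disjoint_inf_orthogonal hB.isRefl hMnd) hU
    ?_ hU'.mem_invtSubmodule
    (isTwistedDual_of_disjoint hBφ hU.mem_invtSubmodule hU'.mem_invtSubmodule h₁ h₂)
  exact not_hasTwistedSymplecticFormOn hB hBφ hU hU'.mem_invtSubmodule hUiso
    (hiso U' hU'N hU') h₁ h₂ fun G hG ↦ hiso G (hG.trans hMN)

theorem isSymplecticTypeDecomposition_of_nondegenerate [FiniteDimensional ℂ V]
    (hss : ∀ q ∈ φ.invtSubmodule, ∃ q' ∈ φ.invtSubmodule, IsCompl q q')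
    (hdim2 : ∀ p, φ.IsIrreducibleSubmodule p → finrank ℂ p ≤ 2)
    (hB : B.IsAlt) (hBφ : B.IsTwistedInvariant φ η)
    (hN : N ∈ φ.invtSubmodule) (hNnd : (B.restrict N).Nondegenerate) :
    IsSymplecticTypeDecomposition η φ N := by
  induction hk : finrank ℂ N using Nat.strong_induction_on generalizing N with | _ k ih =>
  by_cases hN₀ : N = ⊥
  · exact hN₀ ▸ isSymplecticTypeDecomposition_bot
  have hsplit : ∀ M ≤ N, M ∈ φ.invtSubmodule → M ≠ ⊥ → (B.restrict M).Nondegenerate →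
      IsSymplecticTypeDecomposition η φ (N ⊓ B.orthogonal M) := by
    intro M hMN hM hM₀ hMnd
    have hlt : N ⊓ B.orthogonal M < N := inf_le_left.lt_of_ne fun h ↦
      hM₀ (disjoint_self.mp ((disjoint_inf_orthogonal hB.isRefl hMnd).mono_right (h ▸ hMN)))
    exact ih _ (hk ▸ Submodule.finrank_lt_finrank_of_lt hlt)
      (φ.invtSubmodule.inf_mem hN (hBφ.orthogonal_mem_invtSubmodule hM))
      (restrict_inf_orthogonal_nondegenerate hB.isRefl hMnd hNnd hMN) rfl
  by_cases hA : ∃ U ≤ N, φ.IsIrreducibleSubmodule U ∧ (B.restrict U).Nondegenerate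
  · obtain ⟨U, hUN, hU, hUnd⟩ := hA
    exact .of_inf_orthogonal_symplectic hdim2 hB hBφ hUN hU hUnd
      (hsplit U hUN hU.mem_invtSubmodule hU.ne_bot hUnd)
  · push Not at hA
    have hiso : ∀ G ≤ N, φ.IsIrreducibleSubmodule G → G ≤ B.orthogonal G := fun G hGN hG ↦
      (restrict_nondegenerate_or_le_orthogonal hB.isRefl hBφ hG).resolve_left (hA G hGN hG)
    obtain ⟨U, hUN, hU⟩ := exists_isIrreducibleSubmodule_le hN hN₀
    obtain ⟨U', hU'N, hU', h₁, h₂⟩ := exists_dual_partner hB.isRefl hBφ hss hN hNnd hUN hU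
    exact .of_inf_orthogonal_dualPair hB hBφ hiso hUN hU'N hU hU' h₁ h₂
      (hsplit _ (sup_le hUN hU'N)
        (φ.invtSubmodule.sup_mem hU.mem_invtSubmodule hU'.mem_invtSubmodule)
        (ne_bot_of_le_ne_bot hU.ne_bot le_sup_left)
        (restrict_sup_nondegenerate hB.isRefl (hiso U hUN hU) h₁ h₂))

end Decomposition

open Representation LinearMap.BilinForm

theorem symplectic_type_decomposition_general
    {W : Type*} [Group W] {V : Type*} [AddCommGroup V] [Module ℂ V]
    [FiniteDimensional ℂ V]
    (η : W →* ℂˣ) (φ : Representation ℂ W V)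
    (hss : ∀ q : Submodule ℂ V, (∀ w : W, ∀ v ∈ q, φ w v ∈ q) →
      ∃ q' : Submodule ℂ V, (∀ w : W, ∀ v ∈ q', φ w v ∈ q') ∧ IsCompl q q')
    (hdim2 : ∀ p : Submodule ℂ V, (∀ w : W, ∀ v ∈ p, φ w v ∈ p) → p ≠ ⊥ →
      (∀ q : Submodule ℂ V, q ≤ p → (∀ w : W, ∀ v ∈ q, φ w v ∈ q) → q = ⊥ ∨ q = p) →
      Module.finrank ℂ p ≤ 2)
    (B : V →ₗ[ℂ] V →ₗ[ℂ] ℂ)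
    (halt : ∀ v : V, B v v = 0)
    (hnondeg : ∀ v : V, (∀ u : V, B v u = 0) → v = 0)
    (hequiv : ∀ (w : W) (u v : V), B (φ w u) (φ w v) = (η w : ℂ) * B u v) :
    ∃ (a c : ℕ) (P : Fin a → Submodule ℂ V) (Q R : Fin c → Submodule ℂ V),
      iSupIndep (Sum.elim P (Sum.elim Q R)) ∧
      iSup (Sum.elim P (Sum.elim Q R)) = ⊤ ∧
      (∀ i, ∀ w : W, ∀ v ∈ P i, φ w v ∈ P i) ∧
      (∀ i, Module.finrank ℂ (P i) = 2) ∧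
      (∀ i, P i ≠ ⊥ ∧ ∀ q : Submodule ℂ V, q ≤ P i →
        (∀ w : W, ∀ v ∈ q, φ w v ∈ q) → q = ⊥ ∨ q = P i) ∧
      (∀ i, HasTwistedSymplecticFormOn φ η (P i)) ∧
      ∃ hQ : ∀ (j) (w : W), ∀ v ∈ Q j, φ w v ∈ Q j,
        (∀ j, Q j ≠ ⊥ ∧ ∀ q : Submodule ℂ V, q ≤ Q j →
          (∀ w : W, ∀ v ∈ q, φ w v ∈ q) → q = ⊥ ∨ q = Q j) ∧
        (∀ j, ¬ HasTwistedSymplecticFormOn φ η (Q j)) ∧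
        (∀ j, ∀ w : W, ∀ v ∈ R j, φ w v ∈ R j) ∧
        (∀ j, ∃ ι : Module.Dual ℂ (Q j) →ₗ[ℂ] V, Function.Injective ι ∧
          LinearMap.range ι = R j ∧
          ∀ (w : W) (f : Module.Dual ℂ (Q j)),
            φ w (ι f) = ι ((η w : ℂ) •
              (f ∘ₗ (φ w⁻¹).restrict (fun v hv => hQ j w⁻¹ v hv)))) := by
  have hss' : ∀ q ∈ φ.invtSubmodule, ∃ q' ∈ φ.invtSubmodule, IsCompl q q' := fun q hq ↦ by
    obtain ⟨q', hq', hcompl⟩ := hss q (mem_invtSubmodule_iff_forall_mem.mp hq)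
    exact ⟨q', mem_invtSubmodule_iff_forall_mem.mpr hq', hcompl⟩
  have hdim2' : ∀ p, φ.IsIrreducibleSubmodule p → finrank ℂ p ≤ 2 := fun p hp ↦
    let ⟨hpinv, hp₀, hpirr⟩ := isIrreducibleSubmodule_iff.mp hp
    hdim2 p hpinv hp₀ hpirr
  have hB : B.IsAlt := halt
  have hnd : (LinearMap.BilinForm.restrict B ⊤).Nondegenerate :=
    (restrict_nondegenerate_iff_forall hB.isRefl).mpr fun v _ hv ↦
      hnondeg v fun u ↦ hv u Submodule.mem_top
  obtain ⟨a, c, P, Q, R, hind, hsup, hP, hQ, hQR⟩ :=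
    isSymplecticTypeDecomposition_of_nondegenerate hss' hdim2' hB hequiv
      (invtSubmodule.top_mem φ) hnd
  have hPirr i := isIrreducibleSubmodule_iff.mp (hP i).1
  have hQirr j := isIrreducibleSubmodule_iff.mp (hQ j)
  exact ⟨a, c, P, Q, R, hind, hsup, fun i ↦ (hPirr i).1, fun i ↦ (hP i).2.1,
    fun i ↦ (hPirr i).2, fun i ↦ (hP i).2.2, fun j ↦ (hQirr j).1, fun j ↦ (hQirr j).2,
    fun j ↦ (hQR j).1, fun j ↦ mem_invtSubmodule_iff_forall_mem.mp (hQR j).2.1,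
    fun j ↦ (hQR j).2.2⟩

/-- Let `W` be a group, `η` a character of `W`, and `φ` a semisimple
complex representation of `W` of dimension `2n` all of whose irreducible invariant
subspaces have dimension at most `2`.  If `φ` carries a nondegenerate `η`-twisted
symplectic form, then `V` decomposes as an internal direct sum
`⊕_{i} P i ⊕ ⊕_{j} (Q j ⊕ R j)` of invariant subspaces, where each `P i` is a
`2`-dimensional irreducible carrying a nondegenerate `η`-twisted symplectic form, each
`Q j` is irreducible carrying no such form, and each `R j` is equivariantly isomorphic to
`(Q j)^∨ ⊗ η`. -/
theorem symplectic_type_decomposition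
    {W : Type*} [Group W] {V : Type*} [AddCommGroup V] [Module ℂ V]
    [FiniteDimensional ℂ V] (n : ℕ) (hdim : Module.finrank ℂ V = 2 * n)
    (η : W →* ℂˣ) (φ : Representation ℂ W V)
    (hss : ∀ q : Submodule ℂ V, (∀ w : W, ∀ v ∈ q, φ w v ∈ q) →
      ∃ q' : Submodule ℂ V, (∀ w : W, ∀ v ∈ q', φ w v ∈ q') ∧ IsCompl q q')
    (hdim2 : ∀ p : Submodule ℂ V, (∀ w : W, ∀ v ∈ p, φ w v ∈ p) → p ≠ ⊥ →
      (∀ q : Submodule ℂ V, q ≤ p → (∀ w : W, ∀ v ∈ q, φ w v ∈ q) → q = ⊥ ∨ q = p) →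
      Module.finrank ℂ p ≤ 2)
    (B : V →ₗ[ℂ] V →ₗ[ℂ] ℂ)
    (halt : ∀ v : V, B v v = 0)
    (hnondeg : ∀ v : V, (∀ u : V, B v u = 0) → v = 0)
    (hequiv : ∀ (w : W) (u v : V), B (φ w u) (φ w v) = (η w : ℂ) * B u v) :
    ∃ (a c : ℕ) (P : Fin a → Submodule ℂ V) (Q R : Fin c → Submodule ℂ V),
      iSupIndep (Sum.elim P (Sum.elim Q R)) ∧
      iSup (Sum.elim P (Sum.elim Q R)) = ⊤ ∧
      (∀ i, ∀ w : W, ∀ v ∈ P i, φ w v ∈ P i) ∧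
      (∀ i, Module.finrank ℂ (P i) = 2) ∧
      (∀ i, P i ≠ ⊥ ∧ ∀ q : Submodule ℂ V, q ≤ P i →
        (∀ w : W, ∀ v ∈ q, φ w v ∈ q) → q = ⊥ ∨ q = P i) ∧
      (∀ i, HasTwistedSymplecticFormOn φ η (P i)) ∧
      ∃ hQ : ∀ (j) (w : W), ∀ v ∈ Q j, φ w v ∈ Q j,
        (∀ j, Q j ≠ ⊥ ∧ ∀ q : Submodule ℂ V, q ≤ Q j →
          (∀ w : W, ∀ v ∈ q, φ w v ∈ q) → q = ⊥ ∨ q = Q j) ∧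
        (∀ j, ¬ HasTwistedSymplecticFormOn φ η (Q j)) ∧
        (∀ j, ∀ w : W, ∀ v ∈ R j, φ w v ∈ R j) ∧
        (∀ j, ∃ ι : Module.Dual ℂ (Q j) →ₗ[ℂ] V, Function.Injective ι ∧
          LinearMap.range ι = R j ∧
          ∀ (w : W) (f : Module.Dual ℂ (Q j)),
            φ w (ι f) = ι ((η w : ℂ) •
              (f ∘ₗ (φ w⁻¹).restrict (fun v hv => hQ j w⁻¹ v hv)))) :=
  symplectic_type_decomposition_general η φ hss hdim2 B halt hnondeg hequiv
end

section
/- Topological snake lemma: given a commutative diagram of (not necessarily Hausdorff) topological vector spaces with rows weakly exact sequences V₁ → V₂ → V₃ → 0 (maps α₁, α₂) and 0 → W₁ → W₂ → W₃ (maps β₁, β₂), vertical maps φᵢ : Vᵢ → Wᵢ, such that α₂ is open and β₁ : W₁ → im β₁ is a topological isomorphism, there is a weakly exact six-term sequence ker φ₁ → ker φ₂ → ker φ₃ → coker φ₁ → coker φ₂ → coker φ₃, where kernels carry the subspace topology and cokernels the quotient topology. -/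
/-!
The algebraic part, including the connecting map `δ`, is Mathlib's snake lemma for modules.
For continuity of `δ`: the open continuous surjection `α₂` restricts to a quotient map
`α₂⁻¹(ker φ₃) → ker φ₃`, and through it `δ` becomes `v ↦ [β₁⁻¹(φ₂ v)]`, which is continuous
because `β₁⁻¹ : range β₁ → W₁` is continuous exactly when `β₁` is open onto its image.
-/

open LinearMap

namespace SnakeLemma

variable {R : Type*} [CommRing R] {V₁ V₂ V₃ W₁ W₂ W₃ : Type*}
  [AddCommGroup V₁] [Module R V₁] [AddCommGroup V₂] [Module R V₂]
  [AddCommGroup V₃] [Module R V₃] [AddCommGroup W₁] [Module R W₁]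
  [AddCommGroup W₂] [Module R W₂] [AddCommGroup W₃] [Module R W₃]
  {α₁ : V₁ →ₗ[R] V₂} {α₂ : V₂ →ₗ[R] V₃} {β₁ : W₁ →ₗ[R] W₂} {β₂ : W₂ →ₗ[R] W₃}
  {φ₁ : V₁ →ₗ[R] W₁} {φ₂ : V₂ →ₗ[R] W₂} {φ₃ : V₃ →ₗ[R] W₃}

theorem map_eq_zero_and_map_eq_zero_iff_exists (hα : Function.Exact α₁ α₂) (hc₁ : β₁ ∘ₗ φ₁ = φ₂ ∘ₗ α₁)
    (hβ₁ : Function.Injective β₁) (v : V₂) :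
    (φ₂ v = 0 ∧ α₂ v = 0) ↔ ∃ u : V₁, φ₁ u = 0 ∧ α₁ u = v := by
  constructor
  · rintro ⟨hφv, hαv⟩
    obtain ⟨u, rfl⟩ := (hα v).1 hαv
    refine ⟨u, hβ₁ ?_, rfl⟩
    rw [map_zero, ← hφv]
    exact congr($hc₁ u)
  · rintro ⟨u, hu, rfl⟩
    refine ⟨?_, hα.apply_apply_eq_zero u⟩
    rw [← LinearMap.comp_apply, ← hc₁, LinearMap.comp_apply, hu, map_zero]

theorem mk_map_eq_zero_iff_exists (hβ : Function.Exact β₁ β₂) (hc₂ : β₂ ∘ₗ φ₂ = φ₃ ∘ₗ α₂)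
    (hα₂ : Function.Surjective α₂) (w : W₂) :
    (Submodule.Quotient.mk (β₂ w) : W₃ ⧸ range φ₃) = 0 ↔
      ∃ u : W₁, (Submodule.Quotient.mk (β₁ u) : W₂ ⧸ range φ₂) = Submodule.Quotient.mk w := by
  have hc₂' (v : V₂) : β₂ (φ₂ v) = φ₃ (α₂ v) := congr($hc₂ v)
  simp only [Submodule.Quotient.mk_eq_zero, Submodule.Quotient.eq]
  constructor
  · rintro ⟨x, hx⟩
    obtain ⟨v, rfl⟩ := hα₂ x
    obtain ⟨u, hu⟩ := (hβ (w - φ₂ v)).1 (by rw [map_sub, hc₂', hx, sub_self])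
    exact ⟨u, -v, by rw [hu, map_neg]; abel⟩
  · rintro ⟨u, v, hv⟩
    refine ⟨-α₂ v, ?_⟩
    rw [map_neg, ← hc₂', hv, map_sub, hβ.apply_apply_eq_zero, zero_sub, neg_neg]

variable (hα : Function.Exact α₁ α₂) (hβ : Function.Exact β₁ β₂) (hc₁ : β₁ ∘ₗ φ₁ = φ₂ ∘ₗ α₁)
    (hc₂ : β₂ ∘ₗ φ₂ = φ₃ ∘ₗ α₂) (hα₂ : Function.Surjective α₂) (hβ₁ : Function.Injective β₁)

noncomputable def kerCokerδ : ker φ₃ →ₗ[R] W₁ ⧸ range φ₁ :=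
  δ' φ₁ φ₂ φ₃ α₁ α₂ hα β₁ β₂ hβ hc₁ hc₂ (ker φ₃).subtype (exact_subtype_ker_map φ₃)
    (range φ₁).mkQ (exact_map_mkQ_range φ₁) hα₂ hβ₁

theorem kerCokerδ_eq (x : ker φ₃) (v : V₂) (w : W₁) (hv : α₂ v = x) (hw : β₁ w = φ₂ v) :
    kerCokerδ hα hβ hc₁ hc₂ hα₂ hβ₁ x = Submodule.Quotient.mk w :=
  δ'_eq _ _ _ _ _ _ _ _ _ _ _ _ _ _ _ _ _ x v hv w hw

theorem kerCokerδ_eq_zero_iff (x : ker φ₃) :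
    kerCokerδ hα hβ hc₁ hc₂ hα₂ hβ₁ x = 0 ↔ ∃ v : V₂, φ₂ v = 0 ∧ α₂ v = x := by
  have hmaps : ∀ v ∈ ker φ₂, α₂ v ∈ ker φ₃ := fun v hv => by
    rw [mem_ker, ← LinearMap.comp_apply, ← hc₂, LinearMap.comp_apply, mem_ker.1 hv, map_zero]
  have := exact_δ'_right φ₁ φ₂ φ₃ α₁ α₂ hα β₁ β₂ hβ hc₁ hc₂ (ker φ₂).subtype
    (exact_subtype_ker_map φ₂) (ker φ₃).subtype (exact_subtype_ker_map φ₃) (range φ₁).mkQ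
    (exact_map_mkQ_range φ₁) hα₂ hβ₁ (α₂.restrict hmaps) rfl Subtype.val_injective x
  rw [kerCokerδ, this]
  exact ⟨fun ⟨v, hv⟩ => ⟨v, v.2, congr_arg Subtype.val hv⟩,
    fun ⟨v, hφv, hαv⟩ => ⟨⟨v, hφv⟩, Subtype.ext hαv⟩⟩

theorem mk_map_eq_zero_iff_exists_kerCokerδ (w : W₁) :
    (Submodule.Quotient.mk (β₁ w) : W₂ ⧸ range φ₂) = 0 ↔
      ∃ x : ker φ₃, kerCokerδ hα hβ hc₁ hc₂ hα₂ hβ₁ x = Submodule.Quotient.mk w := by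
  have hmaps : range φ₁ ≤ (range φ₂).comap β₁ := by
    rintro _ ⟨u, rfl⟩
    exact ⟨α₁ u, congr($hc₁ u).symm⟩
  exact exact_δ'_left φ₁ φ₂ φ₃ α₁ α₂ hα β₁ β₂ hβ hc₁ hc₂ (ker φ₃).subtype
    (exact_subtype_ker_map φ₃) (range φ₁).mkQ (exact_map_mkQ_range φ₁) (range φ₂).mkQ
    (exact_map_mkQ_range φ₂) hα₂ hβ₁ ((range φ₁).mapQ (range φ₂) β₁ hmaps) rfl
    (Submodule.mkQ_surjective _) (Submodule.Quotient.mk w)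

theorem continuous_kerCokerδ [TopologicalSpace V₂] [TopologicalSpace V₃] [TopologicalSpace W₁]
    [TopologicalSpace W₂] (hα₂c : Continuous α₂) (hα₂o : IsOpenMap α₂) (hφ₂ : Continuous φ₂)
    (hβ₁o : IsOpenMap β₁.rangeRestrict) :
    Continuous (kerCokerδ hα hβ hc₁ hc₂ hα₂ hβ₁) := by
  let r := (ker φ₃ : Set V₃).restrictPreimage α₂
  have hr : Topology.IsQuotientMap r :=
    (hα₂o.restrictPreimage _).isQuotientMap hα₂c.restrictPreimage (hα₂.restrictPreimage _)
  let e := (LinearEquiv.ofInjective β₁ hβ₁).toEquiv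
  have he : Continuous e.symm := e.continuous_symm_iff.2 hβ₁o
  have hlift (v : α₂ ⁻¹' ker φ₃) : φ₂ v ∈ range β₁ := by
    rw [← hβ.linearMap_ker_eq, mem_ker, ← LinearMap.comp_apply, hc₂, LinearMap.comp_apply]
    exact v.2
  have hcomp : kerCokerδ hα hβ hc₁ hc₂ hα₂ hβ₁ ∘ r =
      (range φ₁).mkQ ∘ e.symm ∘ fun v => ⟨φ₂ v.1, hlift v⟩ := by
    funext v
    exact kerCokerδ_eq hα hβ hc₁ hc₂ hα₂ hβ₁ (r v) v _ rfl
      congr(Subtype.val $(e.apply_symm_apply ⟨φ₂ v.1, hlift v⟩))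
  rw [hr.continuous_iff, hcomp]
  exact continuous_quot_mk.comp (he.comp ((hφ₂.comp continuous_subtype_val).subtype_mk _))

end SnakeLemma

theorem topological_snake_lemma_general
    (V₁ V₂ V₃ W₁ W₂ W₃ : Type)
    [AddCommGroup V₁] [Module ℂ V₁]
    [AddCommGroup V₂] [Module ℂ V₂] [TopologicalSpace V₂]
    [AddCommGroup V₃] [Module ℂ V₃] [TopologicalSpace V₃]
    [AddCommGroup W₁] [Module ℂ W₁] [TopologicalSpace W₁]
    [AddCommGroup W₂] [Module ℂ W₂] [TopologicalSpace W₂]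
    [AddCommGroup W₃] [Module ℂ W₃]
    (α₁ : V₁ →ₗ[ℂ] V₂) (α₂ : V₂ →ₗ[ℂ] V₃)
    (β₁ : W₁ →ₗ[ℂ] W₂) (β₂ : W₂ →ₗ[ℂ] W₃)
    (φ₁ : V₁ →ₗ[ℂ] W₁) (φ₂ : V₂ →ₗ[ℂ] W₂) (φ₃ : V₃ →ₗ[ℂ] W₃)
    (hα₂ : Continuous α₂) (hφ₂ : Continuous φ₂)
    -- weak exactness of the top row `V₁ → V₂ → V₃ → 0`
    (htop : LinearMap.range α₁ = LinearMap.ker α₂) (hsurj : Function.Surjective α₂)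
    -- weak exactness of the bottom row `0 → W₁ → W₂ → W₃`
    (hinj : Function.Injective β₁) (hbot : LinearMap.range β₁ = LinearMap.ker β₂)
    -- commutativity of the diagram
    (hc₁ : β₁ ∘ₗ φ₁ = φ₂ ∘ₗ α₁) (hc₂ : β₂ ∘ₗ φ₂ = φ₃ ∘ₗ α₂)
    -- `α₂` open, `β₁` a topological isomorphism onto its image
    (hopen : IsOpenMap α₂)
    (hstrict : ∀ U : Set W₁, IsOpen U →
      IsOpen {y : LinearMap.range β₁ | (y : W₂) ∈ β₁ '' U}) :
    ∃ δ : LinearMap.ker φ₃ →ₗ[ℂ] (W₁ ⧸ LinearMap.range φ₁),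
      Continuous δ ∧
      -- `δ` is the usual connecting map of the diagram chase
      (∀ (x : LinearMap.ker φ₃) (v : V₂) (w : W₁),
        α₂ v = (x : V₃) → β₁ w = φ₂ v → δ x = Submodule.Quotient.mk w) ∧
      -- exactness at `ker φ₂`
      (∀ v : V₂, (φ₂ v = 0 ∧ α₂ v = 0) ↔ ∃ u : V₁, φ₁ u = 0 ∧ α₁ u = v) ∧
      -- exactness at `ker φ₃`
      (∀ x : LinearMap.ker φ₃, δ x = 0 ↔ ∃ v : V₂, φ₂ v = 0 ∧ α₂ v = (x : V₃)) ∧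
      -- exactness at `coker φ₁`
      (∀ w : W₁, (Submodule.Quotient.mk (β₁ w) : W₂ ⧸ LinearMap.range φ₂) = 0 ↔
        ∃ x : LinearMap.ker φ₃, δ x = Submodule.Quotient.mk w) ∧
      -- exactness at `coker φ₂`
      (∀ w : W₂, (Submodule.Quotient.mk (β₂ w) : W₃ ⧸ LinearMap.range φ₃) = 0 ↔
        ∃ u : W₁, (Submodule.Quotient.mk (β₁ u) : W₂ ⧸ LinearMap.range φ₂) =
          Submodule.Quotient.mk w) := by
  have hα : Function.Exact α₁ α₂ := LinearMap.exact_iff.2 htop.symm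
  have hβ : Function.Exact β₁ β₂ := LinearMap.exact_iff.2 hbot.symm
  have hβ₁o : IsOpenMap β₁.rangeRestrict := fun U hU => by
    convert hstrict U hU using 1
    ext y
    exact ⟨fun ⟨u, hu, h⟩ => ⟨u, hu, congr_arg Subtype.val h⟩,
      fun ⟨u, hu, h⟩ => ⟨u, hu, Subtype.ext h⟩⟩
  exact ⟨SnakeLemma.kerCokerδ hα hβ hc₁ hc₂ hsurj hinj,
    SnakeLemma.continuous_kerCokerδ hα hβ hc₁ hc₂ hsurj hinj hα₂ hopen hφ₂ hβ₁o,
    SnakeLemma.kerCokerδ_eq hα hβ hc₁ hc₂ hsurj hinj,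
    SnakeLemma.map_eq_zero_and_map_eq_zero_iff_exists hα hc₁ hinj,
    SnakeLemma.kerCokerδ_eq_zero_iff hα hβ hc₁ hc₂ hsurj hinj,
    SnakeLemma.mk_map_eq_zero_iff_exists_kerCokerδ hα hβ hc₁ hc₂ hsurj hinj,
    SnakeLemma.mk_map_eq_zero_iff_exists hβ hc₂ hsurj⟩

/-- **topological snake lemma.**  Given a commutative diagram of (not
necessarily Hausdorff) topological `ℂ`-vector spaces with weakly exact rows
`V₁ → V₂ → V₃ → 0` and `0 → W₁ → W₂ → W₃`, vertical continuous maps `φᵢ : Vᵢ → Wᵢ`,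
such that `α₂` is an open map and `β₁` is a topological isomorphism onto its image,
there is a continuous connecting map `δ : ker φ₃ → coker φ₁` (given by the usual diagram
chase) making the six-term sequence
`ker φ₁ → ker φ₂ → ker φ₃ → coker φ₁ → coker φ₂ → coker φ₃` weakly exact, where kernels
carry the subspace topology and cokernels the quotient topology. -/
theorem topological_snake_lemma
    (V₁ V₂ V₃ W₁ W₂ W₃ : Type)
    [AddCommGroup V₁] [Module ℂ V₁] [TopologicalSpace V₁] [IsTopologicalAddGroup V₁] [ContinuousSMul ℂ V₁]
    [AddCommGroup V₂] [Module ℂ V₂] [TopologicalSpace V₂] [IsTopologicalAddGroup V₂] [ContinuousSMul ℂ V₂]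
    [AddCommGroup V₃] [Module ℂ V₃] [TopologicalSpace V₃] [IsTopologicalAddGroup V₃] [ContinuousSMul ℂ V₃]
    [AddCommGroup W₁] [Module ℂ W₁] [TopologicalSpace W₁] [IsTopologicalAddGroup W₁] [ContinuousSMul ℂ W₁]
    [AddCommGroup W₂] [Module ℂ W₂] [TopologicalSpace W₂] [IsTopologicalAddGroup W₂] [ContinuousSMul ℂ W₂]
    [AddCommGroup W₃] [Module ℂ W₃] [TopologicalSpace W₃] [IsTopologicalAddGroup W₃] [ContinuousSMul ℂ W₃]
    (α₁ : V₁ →ₗ[ℂ] V₂) (α₂ : V₂ →ₗ[ℂ] V₃)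
    (β₁ : W₁ →ₗ[ℂ] W₂) (β₂ : W₂ →ₗ[ℂ] W₃)
    (φ₁ : V₁ →ₗ[ℂ] W₁) (φ₂ : V₂ →ₗ[ℂ] W₂) (φ₃ : V₃ →ₗ[ℂ] W₃)
    (hα₁ : Continuous α₁) (hα₂ : Continuous α₂)
    (hβ₁ : Continuous β₁) (hβ₂ : Continuous β₂)
    (hφ₁ : Continuous φ₁) (hφ₂ : Continuous φ₂) (hφ₃ : Continuous φ₃)
    -- weak exactness of the top row `V₁ → V₂ → V₃ → 0`
    (htop : LinearMap.range α₁ = LinearMap.ker α₂) (hsurj : Function.Surjective α₂)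
    -- weak exactness of the bottom row `0 → W₁ → W₂ → W₃`
    (hinj : Function.Injective β₁) (hbot : LinearMap.range β₁ = LinearMap.ker β₂)
    -- commutativity of the diagram
    (hc₁ : β₁ ∘ₗ φ₁ = φ₂ ∘ₗ α₁) (hc₂ : β₂ ∘ₗ φ₂ = φ₃ ∘ₗ α₂)
    -- `α₂` open, `β₁` a topological isomorphism onto its image
    (hopen : IsOpenMap α₂)
    (hstrict : ∀ U : Set W₁, IsOpen U →
      IsOpen {y : LinearMap.range β₁ | (y : W₂) ∈ β₁ '' U}) :
    ∃ δ : LinearMap.ker φ₃ →ₗ[ℂ] (W₁ ⧸ LinearMap.range φ₁),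
      Continuous δ ∧
      -- `δ` is the usual connecting map of the diagram chase
      (∀ (x : LinearMap.ker φ₃) (v : V₂) (w : W₁),
        α₂ v = (x : V₃) → β₁ w = φ₂ v → δ x = Submodule.Quotient.mk w) ∧
      -- exactness at `ker φ₂`
      (∀ v : V₂, (φ₂ v = 0 ∧ α₂ v = 0) ↔ ∃ u : V₁, φ₁ u = 0 ∧ α₁ u = v) ∧
      -- exactness at `ker φ₃`
      (∀ x : LinearMap.ker φ₃, δ x = 0 ↔ ∃ v : V₂, φ₂ v = 0 ∧ α₂ v = (x : V₃)) ∧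
      -- exactness at `coker φ₁`
      (∀ w : W₁, (Submodule.Quotient.mk (β₁ w) : W₂ ⧸ LinearMap.range φ₂) = 0 ↔
        ∃ x : LinearMap.ker φ₃, δ x = Submodule.Quotient.mk w) ∧
      -- exactness at `coker φ₂`
      (∀ w : W₂, (Submodule.Quotient.mk (β₂ w) : W₃ ⧸ LinearMap.range φ₃) = 0 ↔
        ∃ u : W₁, (Submodule.Quotient.mk (β₁ u) : W₂ ⧸ LinearMap.range φ₂) =
          Submodule.Quotient.mk w) :=
  topological_snake_lemma_general V₁ V₂ V₃ W₁ W₂ W₃ α₁ α₂ β₁ β₂ φ₁ φ₂ φ₃ hα₂ hφ₂ htop hsurj hinj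
    hbot hc₁ hc₂ hopen hstrict
end

section
/- The group G_B × GL(W) acts transitively on 𝒪_B = {(T, X) ∈ Hom(V₁,W) × Hom(W,V₂) : X∘T = B}, where GL(W) acts by h·(T,X) = (h∘T, X∘h⁻¹) and G_B = {(g, BgB⁻¹) : g ∈ GL(V₁)} acts by (g, BgB⁻¹)·(T,X) = (T∘g⁻¹, BgB⁻¹∘X). -/
/-!
`X ∘ T = B` makes `T ∘ B⁻¹` a section of `X`, so `W ≃ ker X × V₂` with `T` landing in the second
factor and `X` the second projection. The kernels of `X` and `X'` both have dimension
`dim W - dim V₂`, so the two splittings are conjugate by an automorphism `h` of `W`, and `g = 1`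
already works.
-/

open Module

namespace LinearMap

variable {R K U W : Type*}

theorem exists_equiv_prod_ker_of_comp_eq_id [Ring R] [AddCommGroup U] [Module R U]
    [AddCommGroup W] [Module R W] {S : U →ₗ[R] W} {X : W →ₗ[R] U} (hXS : X ∘ₗ S = .id) :
    ∃ e : W ≃ₗ[R] ker X × U, e.symm ∘ₗ inr R (ker X) U = S ∧ snd R (ker X) U ∘ₗ e = X := by
  let split := (exact_subtype_ker_map X).splitSurjectiveEquiv (ker X).injective_subtype
  refine ⟨(split ⟨S, hXS⟩).1, ?_, (split ⟨S, hXS⟩).2.2.symm⟩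
  exact congrArg Subtype.val (split.symm_apply_apply ⟨S, hXS⟩)

theorem finrank_ker_add_finrank_of_comp_eq_id [DivisionRing K] [AddCommGroup U]
    [Module K U] [AddCommGroup W] [Module K W] [FiniteDimensional K W]
    {S : U →ₗ[K] W} {X : W →ₗ[K] U} (hXS : X ∘ₗ S = .id) :
    finrank K (ker X) + finrank K U = finrank K W := by
  have hX : range X = ⊤ := range_eq_top.2 fun u => ⟨S u, LinearMap.congr_fun hXS u⟩
  rw [← finrank_range_add_finrank_ker X, hX, finrank_top, add_comm]

theorem exists_linearEquiv_of_comp_eq_id [DivisionRing K] [AddCommGroup U]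
    [Module K U] [AddCommGroup W] [Module K W] [FiniteDimensional K W]
    {S S' : U →ₗ[K] W} {X X' : W →ₗ[K] U} (hXS : X ∘ₗ S = .id) (hXS' : X' ∘ₗ S' = .id) :
    ∃ φ : W ≃ₗ[K] W, φ ∘ₗ S = S' ∧ X' ∘ₗ φ = X := by
  obtain ⟨e, heS, heX⟩ := exists_equiv_prod_ker_of_comp_eq_id hXS
  obtain ⟨e', heS', heX'⟩ := exists_equiv_prod_ker_of_comp_eq_id hXS'
  have hker : finrank K (ker X) = finrank K (ker X') := by
    have := finrank_ker_add_finrank_of_comp_eq_id hXS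
    have := finrank_ker_add_finrank_of_comp_eq_id hXS'
    omega
  let ψ := (LinearEquiv.ofFinrankEq _ _ hker).prodCongr (LinearEquiv.refl K U)
  refine ⟨e ≪≫ₗ ψ ≪≫ₗ e'.symm, ?_, ?_⟩
  · rw [← heS, ← heS']
    ext u
    simp [ψ]
  · ext w
    simp only [ψ, coe_comp, LinearEquiv.coe_coe, Function.comp_apply, LinearEquiv.trans_apply]
    rw [← LinearMap.congr_fun heX w, ← LinearMap.congr_fun heX' (e'.symm _)]
    simp

end LinearMap

theorem orbit_transitive_general
    {K : Type*} [Field K] {V₁ V₂ W : Type*}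
    [AddCommGroup V₁] [Module K V₁] [AddCommGroup V₂] [Module K V₂]
    [AddCommGroup W] [Module K W]
    [FiniteDimensional K W]
    (B : V₁ ≃ₗ[K] V₂)
    (T T' : V₁ →ₗ[K] W) (X X' : W →ₗ[K] V₂)
    (h : X ∘ₗ T = (B : V₁ →ₗ[K] V₂)) (h' : X' ∘ₗ T' = (B : V₁ →ₗ[K] V₂)) :
    ∃ (g : V₁ ≃ₗ[K] V₁) (hGL : W ≃ₗ[K] W),
      T' = (hGL : W →ₗ[K] W) ∘ₗ T ∘ₗ (g.symm : V₁ →ₗ[K] V₁) ∧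
      X' = ((B : V₁ →ₗ[K] V₂) ∘ₗ (g : V₁ →ₗ[K] V₁) ∘ₗ (B.symm : V₂ →ₗ[K] V₁)) ∘ₗ
              X ∘ₗ (hGL.symm : W →ₗ[K] W) := by
  have section_of {S : V₁ →ₗ[K] W} {Y : W →ₗ[K] V₂} (hYS : Y ∘ₗ S = B) :
      Y ∘ₗ (S ∘ₗ B.symm) = .id := by
    ext u
    simpa using LinearMap.congr_fun hYS (B.symm u)
  obtain ⟨φ, hφT, hφX⟩ := LinearMap.exists_linearEquiv_of_comp_eq_id (section_of h) (section_of h')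
  refine ⟨.refl K V₁, φ, ?_, ?_⟩
  · ext v
    simpa using (LinearMap.congr_fun hφT (B v)).symm
  · ext w
    simpa using LinearMap.congr_fun hφX (φ.symm w)

/-- The group `G_B × GL(W)` acts transitively on
`𝒪_B = {(T, X) : X ∘ T = B}`, where `h ∈ GL(W)` acts by `(T,X) ↦ (h∘T, X∘h⁻¹)` and
`(g, BgB⁻¹) ∈ G_B` (for `g ∈ GL(V₁)`) acts by `(T,X) ↦ (T∘g⁻¹, (B g B⁻¹)∘X)`.
Transitivity: for any two pairs `(T,X)`, `(T',X')` with `X∘T = X'∘T' = B` there exist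
`g ∈ GL(V₁)` and `h ∈ GL(W)` carrying one to the other. -/
theorem orbit_transitive
    {K : Type*} [Field K] {V₁ V₂ W : Type*}
    [AddCommGroup V₁] [Module K V₁] [AddCommGroup V₂] [Module K V₂]
    [AddCommGroup W] [Module K W]
    [FiniteDimensional K V₁] [FiniteDimensional K V₂] [FiniteDimensional K W]
    (n : ℕ) (h1 : Module.finrank K V₁ = n) (h2 : Module.finrank K V₂ = n)
    (hW : Module.finrank K W = 2 * n)
    (B : V₁ ≃ₗ[K] V₂)
    (T T' : V₁ →ₗ[K] W) (X X' : W →ₗ[K] V₂)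
    (h : X ∘ₗ T = (B : V₁ →ₗ[K] V₂)) (h' : X' ∘ₗ T' = (B : V₁ →ₗ[K] V₂)) :
    ∃ (g : V₁ ≃ₗ[K] V₁) (hGL : W ≃ₗ[K] W),
      T' = (hGL : W →ₗ[K] W) ∘ₗ T ∘ₗ (g.symm : V₁ →ₗ[K] V₁) ∧
      X' = ((B : V₁ →ₗ[K] V₂) ∘ₗ (g : V₁ →ₗ[K] V₁) ∘ₗ (B.symm : V₂ →ₗ[K] V₁)) ∘ₗ
              X ∘ₗ (hGL.symm : W →ₗ[K] W) :=
  orbit_transitive_general B T T' X X' h h'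
end

section
/- Let G = GL₂(ℝ), T₂ the diagonal torus, N₂ the upper-triangular unipotent subgroup, and D_k the discrete series representation of GL₂(ℝ) of minimal K-type with highest weight k+1 and central character sgn^{k+1}. Then the zeroth N₂-coinvariants (Jacquet module) of D_k, as a T₂ = ℝ^× × ℝ^×-module, equals (ε|·|^{(k+1)/2} ⊠ |·|^{−(k+1)/2}) ⊕ (ε·sgn·|·|^{(k+1)/2} ⊠ sgn·|·|^{−(k+1)/2}), where ε = sgn if k is even and ε = 1 if k is odd; moreover all higher N₂-homology of D_k vanishes. -/
/-!
Work in the compact picture of `gl₂(ℂ)`: `rot = ρ !![0, 1; -1, 0]` generates `SO(2)`, and the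
Cayley-transformed elements `raise` and `lower` move its eigenvalues `I * m` to `I * (m ± 2)`.
Let `v₀` span the line of weight `k + 1`. Irreducibility makes the Casimir a scalar `μ`; as `k - 1`
is not a weight, `μ = k² - 1`, and a second use of irreducibility gives `lower v₀ = 0`. Hence `V`
has the basis `raiseⁿ v₀, τ (raiseⁿ v₀)` of weights `±(k + 1 + 2n)`. On each of the two chains
`e = ½ rot + (I/4) lower - (I/4) raise` raises the index by one modulo lower indices, so `e` is
injective, and the relations `e (raiseⁿ v₀) ≡ 0` reduce `raiseⁿ v₀` to `2ⁿ (k + 1) ⋯ (k + n) • v₀`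
modulo `e V`. So `V / e V` has basis `v₀ ± τ v₀`, on which `diag(1, 0)` acts by `(k + 1) / 2` and
`τ` by `±1`.
-/

open Matrix

attribute [local instance 100] LieRing.ofAssociativeRing

open Complex Submodule

section LinearAlgebra

variable {K V : Type*} [Field K] [AddCommGroup V] [Module K V]

theorem Module.End.mem_span_image_of_eigenvalue_eq {ι : Type*} {f : Module.End K V} {b : ι → V}
    {c : ι → K} (hb : ∀ i, f (b i) = c i • b i) {a : K} {v : V}
    (hv : v ∈ span K (Set.range b)) (hfv : f v = a • v) :
    v ∈ span K (b '' {i | c i = a}) := by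
  have hle : span K (Set.range b) ≤
      (⨆ (μ) (_ : μ ≠ a), f.eigenspace μ) ⊔ span K (b '' {i | c i = a}) := by
    rw [span_le]
    rintro _ ⟨i, rfl⟩
    by_cases hi : c i = a
    · exact mem_sup_right (subset_span ⟨i, hi, rfl⟩)
    · exact mem_sup_left (mem_iSup_of_mem (c i) (mem_iSup_of_mem hi
        (Module.End.mem_eigenspace_iff.mpr (hb i))))
  have htE : span K (b '' {i | c i = a}) ≤ f.eigenspace a := by
    rw [span_le]
    rintro _ ⟨i, hi, rfl⟩
    exact Module.End.mem_eigenspace_iff.mpr (hi ▸ hb i)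
  obtain ⟨s, hs, t, ht, rfl⟩ := mem_sup.mp (hle hv)
  have hsE : s ∈ f.eigenspace a := by
    rw [← add_sub_cancel_right s t]
    exact sub_mem (Module.End.mem_eigenspace_iff.mpr hfv) (htE ht)
  rwa [disjoint_def.mp (f.eigenspaces_iSupIndep a) s hsE hs, zero_add]

theorem disjoint_ker_span_range_of_triangular {f : V →ₗ[K] V} {b : ℕ → V}
    (hb : LinearIndependent K b) {c : ℕ → K} (hc : ∀ n, c n ≠ 0)
    (hf : ∀ n, f (b n) - c n • b (n + 1) ∈ span K (b '' Set.Iio (n + 1))) :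
    Disjoint (LinearMap.ker f) (span K (Set.range b)) := by
  set F : ℕ → Submodule K V := fun n => span K (b '' Set.Iio n) with hF
  have hmono : Monotone F := fun m n h => span_mono (Set.image_mono (Set.Iio_subset_Iio h))
  have hmem : ∀ n, b n ∈ F (n + 1) := fun n => subset_span ⟨n, Nat.lt_succ_self n, rfl⟩
  have hmaps : ∀ n, F n ≤ (F (n + 1)).comap f := by
    intro n
    rw [hF, span_le]
    rintro _ ⟨j, hj, rfl⟩
    have hjn : j + 1 ≤ n := hj
    rw [SetLike.mem_coe, mem_comap, ← sub_add_cancel (f (b j)) (c j • b (j + 1))]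
    exact add_mem (hmono (by omega) (hf j)) (smul_mem _ _ (hmono (by omega) (hmem (j + 1))))
  have hinsert : ∀ n, b '' Set.Iio (n + 1) = insert (b n) (b '' Set.Iio n) := by
    intro n
    rw [← Set.image_insert_eq]
    congr 1
    ext j
    simp
  have key : ∀ n, ∀ v ∈ F n, f v = 0 → v = 0 := by
    intro n
    induction n with
    | zero => intro v hv _; simpa [hF] using hv
    | succ n ih =>
      intro v hv hfv
      rw [hF] at hv
      simp only [hinsert, mem_span_insert] at hv
      obtain ⟨a, w, hw, rfl⟩ := hv
      have hlead : (a * c n) • b (n + 1) ∈ F (n + 1) := by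
        have : (a * c n) • b (n + 1) = -(a • (f (b n) - c n • b (n + 1))) - f w := by
          rw [map_add, map_smul] at hfv
          rw [← sub_eq_zero, ← hfv]
          module
        rw [this]
        exact sub_mem (neg_mem (smul_mem _ _ (hf n))) (hmaps n hw)
      have ha : a = 0 := by
        by_contra ha
        refine hb.notMem_span_image (s := Set.Iio (n + 1)) (x := n + 1) (by simp) ?_
        simpa [smul_mem_iff _ (mul_ne_zero ha (hc n))] using hlead
      subst ha
      rw [zero_smul, zero_add] at hfv ⊢
      exact ih w hw hfv
  rw [disjoint_def]
  intro v hker hspan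
  obtain ⟨n, hn⟩ : ∃ n, v ∈ F n := by
    clear hker
    induction hspan using span_induction with
    | mem x hx => obtain ⟨n, rfl⟩ := hx; exact ⟨n + 1, hmem n⟩
    | zero => exact ⟨0, zero_mem _⟩
    | add x y _ _ hx hy =>
      obtain ⟨m, hm⟩ := hx
      obtain ⟨n, hn⟩ := hy
      exact ⟨max m n, add_mem (hmono (le_max_left m n) hm) (hmono (le_max_right m n) hn)⟩
    | smul a x _ hx => obtain ⟨n, hn⟩ := hx; exact ⟨n, smul_mem _ a hn⟩
  exact key n v hn hker

theorem finrank_quotient_eq_two {N : Submodule K V} {u₁ u₂ : V}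
    (hspan : span K {u₁, u₂} ⊔ N = ⊤)
    (hindep : ∀ a b : K, a • u₁ + b • u₂ ∈ N → a = 0 ∧ b = 0) :
    Module.finrank K (V ⧸ N) = 2 := by
  have hli : LinearIndependent K ![N.mkQ u₁, N.mkQ u₂] := by
    refine LinearIndependent.pair_iff.mpr fun a b h => hindep a b ?_
    rwa [← map_smul, ← map_smul, ← map_add, mkQ_apply, Quotient.mk_eq_zero] at h
  have htop : ⊤ ≤ span K (Set.range ![N.mkQ u₁, N.mkQ u₂]) := by
    rw [Matrix.range_cons, Matrix.range_cons, Matrix.range_empty, Set.union_empty,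
      Set.singleton_union, ← Set.image_pair, ← map_span, top_le_iff, map_mkQ_eq_top, sup_comm,
      hspan]
  simpa using Module.finrank_eq_card_basis (Module.Basis.mk hli htop)

theorem sub_smul_mem_of_sup_eq_top {N : Submodule K V} {T : V →ₗ[K] V}
    (hT : ∀ v ∈ N, T v ∈ N) {s : Set V} (hs : span K s ⊔ N = ⊤) {c : K}
    (h : ∀ x ∈ s, T x - c • x ∈ N) (v : V) :
    T v - c • v ∈ N := by
  have hle : span K s ⊔ N ≤ N.comap (T - c • LinearMap.id) :=
    sup_le (span_le.mpr h) fun x hx => sub_mem (hT x hx) (smul_mem _ _ hx)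
  exact hle (hs ▸ mem_top)

theorem Submodule.exists_eq_span_singleton_of_finrank_eq_one {S : Submodule K V}
    (h : Module.finrank K S = 1) : ∃ v ≠ 0, S = span K {v} := by
  obtain ⟨v, hv, hv0⟩ := S.exists_mem_ne_zero_of_ne_bot (by rintro rfl; simp at h)
  exact ⟨v, hv0, eq_span_singleton_of_mem_of_finrank_eq_one h hv hv0⟩

theorem LinearIndependent.exists_linearMap_apply_eq {ι : Type*} {b : ι → V}
    (hli : LinearIndependent K b) (hspan : span K (Set.range b) = ⊤) (f : ι → K) :
    ∃ ψ : V →ₗ[K] K, ∀ i, ψ (b i) = f i :=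
  ⟨(Module.Basis.mk hli hspan.ge).constr K f, fun i => by
    rw [← Module.Basis.mk_apply hli hspan.ge i, Module.Basis.constr_basis]⟩

theorem span_setOf_eq_apply_eq_range (f : V →ₗ[K] V) :
    span K {w | ∃ v, w = f v} = LinearMap.range f := by
  rw [← span_eq (LinearMap.range f)]
  congr 1
  ext
  simp [eq_comm]

end LinearAlgebra

namespace GL2

variable {V : Type*} [AddCommGroup V] [Module ℂ V]
  (ρ : Matrix (Fin 2) (Fin 2) ℂ →ₗ⁅ℂ⁆ Module.End ℂ V)

def rot : Module.End ℂ V := ρ !![0, 1; -1, 0]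

def raise : Module.End ℂ V := ρ !![1, I; I, -1]

def lower : Module.End ℂ V := ρ !![1, -I; -I, -1]

theorem map_apply_map_of_lie_eq {A B C : Matrix (Fin 2) (Fin 2) ℂ} {c : ℂ}
    (h : A * B - B * A = c • C) (v : V) : ρ A (ρ B v) = ρ B (ρ A v) + c • ρ C v := by
  have hv := LinearMap.congr_fun (ρ.map_lie A B) v
  rw [Ring.lie_def, Ring.lie_def, h, map_smul] at hv
  rw [← LinearMap.smul_apply, hv, LinearMap.sub_apply, Module.End.mul_apply,
    Module.End.mul_apply, add_sub_cancel]

theorem rot_raise_apply (v : V) :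
    rot ρ (raise ρ v) = raise ρ (rot ρ v) + (2 * I) • raise ρ v :=
  map_apply_map_of_lie_eq ρ (by
    ext i j; fin_cases i <;> fin_cases j <;> simp <;> ring_nf <;> simp [I_sq]) v

theorem rot_lower_apply (v : V) :
    rot ρ (lower ρ v) = lower ρ (rot ρ v) - (2 * I) • lower ρ v := by
  rw [sub_eq_add_neg, ← neg_smul]
  exact map_apply_map_of_lie_eq ρ (by
    ext i j; fin_cases i <;> fin_cases j <;> simp <;> ring_nf <;> simp [I_sq]) v

theorem lower_raise_apply (v : V) :
    lower ρ (raise ρ v) = raise ρ (lower ρ v) + (4 * I) • rot ρ v :=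
  map_apply_map_of_lie_eq ρ (by
    ext i j; fin_cases i <;> fin_cases j <;> simp <;> ring_nf) v

theorem map_eq_of_map_one_eq_zero (hcenter : ρ 1 = 0) (A : Matrix (Fin 2) (Fin 2) ℂ) :
    ρ A = ((A 0 0 - A 1 1) / 4 - I * (A 0 1 + A 1 0) / 4) • raise ρ
      + ((A 0 0 - A 1 1) / 4 + I * (A 0 1 + A 1 0) / 4) • lower ρ
      + ((A 0 1 - A 1 0) / 2) • rot ρ := by
  have hA : A = ((A 0 0 + A 1 1) / 2) • (1 : Matrix (Fin 2) (Fin 2) ℂ)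
      + ((A 0 0 - A 1 1) / 4 - I * (A 0 1 + A 1 0) / 4) • !![1, I; I, -1]
      + ((A 0 0 - A 1 1) / 4 + I * (A 0 1 + A 1 0) / 4) • !![1, -I; -I, -1]
      + ((A 0 1 - A 1 0) / 2) • !![0, 1; -1, 0] := by
    ext i j; fin_cases i <;> fin_cases j <;> simp <;> ring_nf <;> simp [I_sq] <;> ring
  conv_lhs => rw [hA]
  simp only [map_add, map_smul, hcenter, smul_zero, zero_add, rot, raise, lower]

theorem map_e :
    ρ !![0, 1; 0, 0] = (1 / 2 : ℂ) • rot ρ + (I / 4) • lower ρ - (I / 4) • raise ρ := by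
  have he : (!![0, 1; 0, 0] : Matrix (Fin 2) (Fin 2) ℂ) = (1 / 2 : ℂ) • !![0, 1; -1, 0]
      + (I / 4) • !![1, -I; -I, -1] - (I / 4) • !![1, I; I, -1] := by
    ext i j; fin_cases i <;> fin_cases j <;> simp <;> ring_nf <;> simp [I_sq]; ring
  rw [he, map_sub, map_add, map_smul, map_smul, map_smul, rot, raise, lower]

theorem map_diag_eq_neg (hcenter : ρ 1 = 0) : ρ !![0, 0; 0, 1] = -ρ !![1, 0; 0, 0] := by
  rw [eq_neg_iff_add_eq_zero, ← map_add, ← hcenter]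
  congr 1
  ext i j; fin_cases i <;> fin_cases j <;> simp

theorem map_h_apply_e_apply (v : V) : ρ !![1, 0; 0, 0] (ρ !![0, 1; 0, 0] v) =
    ρ !![0, 1; 0, 0] (ρ !![1, 0; 0, 0] v + v) := by
  rw [map_apply_map_of_lie_eq ρ (C := !![0, 1; 0, 0]) (c := 1)
    (by ext i j; fin_cases i <;> fin_cases j <;> simp), one_smul, map_add]

noncomputable def casimir : Module.End ℂ V :=
  (1 / 2 : ℂ) • (raise ρ * lower ρ + lower ρ * raise ρ) - rot ρ * rot ρ

theorem casimir_apply (v : V) : casimir ρ v =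
    (1 / 2 : ℂ) • (raise ρ (lower ρ v) + lower ρ (raise ρ v)) - rot ρ (rot ρ v) := rfl

theorem casimir_raise_apply (v : V) : casimir ρ (raise ρ v) = raise ρ (casimir ρ v) := by
  simp only [casimir_apply, lower_raise_apply, rot_raise_apply, map_add, map_sub, map_smul]
  module

theorem casimir_lower_apply (v : V) : casimir ρ (lower ρ v) = lower ρ (casimir ρ v) := by
  have h (w : V) : raise ρ (lower ρ w) = lower ρ (raise ρ w) - (4 * I) • rot ρ w := by
    rw [lower_raise_apply, add_sub_cancel_right]
  simp only [casimir_apply, h, rot_lower_apply, map_add, map_sub, map_smul]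
  module

theorem casimir_rot_apply (v : V) : casimir ρ (rot ρ v) = rot ρ (casimir ρ v) := by
  simp only [casimir_apply, rot_raise_apply, rot_lower_apply, map_add, map_sub, map_smul]
  module

def IntertwinesConj (τ : V ≃ₗ[ℂ] V) : Prop :=
  ∀ (A : Matrix (Fin 2) (Fin 2) ℂ) (v : V),
    τ (ρ A v) = ρ (!![1, 0; 0, -1] * A * !![1, 0; 0, -1]) (τ v)

def IsIrreducible (τ : V ≃ₗ[ℂ] V) : Prop :=
  ∀ p : Submodule ℂ V, (∀ (A : Matrix (Fin 2) (Fin 2) ℂ), ∀ v ∈ p, ρ A v ∈ p) →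
    (∀ v ∈ p, τ v ∈ p) → p = ⊥ ∨ p = ⊤

def chain (τ : V ≃ₗ[ℂ] V) (v : V) : ℕ ⊕ ℕ → V :=
  Sum.elim (fun n => (raise ρ ^ n) v) (fun n => τ ((raise ρ ^ n) v))

theorem span_range_chain (τ : V ≃ₗ[ℂ] V) (v : V) :
    span ℂ (Set.range (chain ρ τ v)) = span ℂ (Set.range fun n => (raise ρ ^ n) v) ⊔
      (span ℂ (Set.range fun n => (raise ρ ^ n) v)).map (τ : V →ₗ[ℂ] V) := by
  rw [chain, Set.Sum.elim_range, span_union, map_span, ← Set.range_comp]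
  rfl

def chainWeight (m : ℂ) : ℕ ⊕ ℕ → ℂ :=
  Sum.elim (fun n => m + 2 * n) (fun n => -(m + 2 * n))

variable {ρ} {τ : V ≃ₗ[ℂ] V}

theorem IntertwinesConj.apply_eq (hτ : IntertwinesConj ρ τ) {A B : Matrix (Fin 2) (Fin 2) ℂ}
    (h : !![1, 0; 0, -1] * A * !![1, 0; 0, -1] = B) (v : V) : τ (ρ A v) = ρ B (τ v) :=
  h ▸ hτ A v

theorem IntertwinesConj.raise_apply (hτ : IntertwinesConj ρ τ) (v : V) :
    τ (raise ρ v) = lower ρ (τ v) :=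
  hτ.apply_eq (by ext i j; fin_cases i <;> fin_cases j <;> simp) v

theorem IntertwinesConj.lower_apply (hτ : IntertwinesConj ρ τ) (v : V) :
    τ (lower ρ v) = raise ρ (τ v) :=
  hτ.apply_eq (by ext i j; fin_cases i <;> fin_cases j <;> simp) v

theorem IntertwinesConj.rot_apply (hτ : IntertwinesConj ρ τ) (v : V) :
    τ (rot ρ v) = -rot ρ (τ v) := by
  rw [← LinearMap.neg_apply, rot, ← map_neg]
  exact hτ.apply_eq (by ext i j; fin_cases i <;> fin_cases j <;> simp) v

theorem IntertwinesConj.e_apply (hτ : IntertwinesConj ρ τ) (v : V) :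
    τ (ρ !![0, 1; 0, 0] v) = -ρ !![0, 1; 0, 0] (τ v) := by
  rw [← LinearMap.neg_apply, ← map_neg]
  exact hτ.apply_eq (by ext i j; fin_cases i <;> fin_cases j <;> simp) v

theorem IntertwinesConj.h_apply (hτ : IntertwinesConj ρ τ) (v : V) :
    τ (ρ !![1, 0; 0, 0] v) = ρ !![1, 0; 0, 0] (τ v) :=
  hτ.apply_eq (by ext i j; fin_cases i <;> fin_cases j <;> simp) v

theorem IntertwinesConj.casimir_apply (hτ : IntertwinesConj ρ τ) (v : V) :
    τ (casimir ρ v) = casimir ρ (τ v) := by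
  simp only [GL2.casimir_apply, map_sub, map_add, map_smul, map_neg, hτ.raise_apply,
    hτ.lower_apply, hτ.rot_apply]
  module

theorem IsIrreducible.eq_bot_or_eq_top (hirr : IsIrreducible ρ τ) (hcenter : ρ 1 = 0)
    {p : Submodule ℂ V} (hU : ∀ v ∈ p, raise ρ v ∈ p) (hD : ∀ v ∈ p, lower ρ v ∈ p)
    (hW : ∀ v ∈ p, rot ρ v ∈ p) (hτ : ∀ v ∈ p, τ v ∈ p) : p = ⊥ ∨ p = ⊤ := by
  refine hirr p (fun A v hv => ?_) hτ
  rw [map_eq_of_map_one_eq_zero ρ hcenter A]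
  exact add_mem (add_mem (smul_mem _ _ (hU v hv)) (smul_mem _ _ (hD v hv)))
    (smul_mem _ _ (hW v hv))

theorem IsIrreducible.sup_map_eq_top (hirr : IsIrreducible ρ τ) (hcenter : ρ 1 = 0)
    (hτ : IntertwinesConj ρ τ) (hτ2 : ∀ v, τ (τ v) = v) {p : Submodule ℂ V}
    (hp : p ≠ ⊥) (hU : ∀ v ∈ p, raise ρ v ∈ p) (hD : ∀ v ∈ p, lower ρ v ∈ p)
    (hW : ∀ v ∈ p, rot ρ v ∈ p) : p ⊔ p.map (τ : V →ₗ[ℂ] V) = ⊤ := by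
  have hsup : ∀ {f : Module.End ℂ V}, (∀ v ∈ p, f v ∈ p) →
      (∀ v ∈ p.map (τ : V →ₗ[ℂ] V), f v ∈ p.map (τ : V →ₗ[ℂ] V)) →
      ∀ v ∈ p ⊔ p.map (τ : V →ₗ[ℂ] V), f v ∈ p ⊔ p.map (τ : V →ₗ[ℂ] V) := by
    intro f h₁ h₂ v hv
    obtain ⟨x, hx, y, hy, rfl⟩ := mem_sup.mp hv
    rw [map_add]
    exact add_mem (mem_sup_left (h₁ x hx)) (mem_sup_right (h₂ y hy))
  refine (hirr.eq_bot_or_eq_top hcenter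
    (hsup hU fun _ ⟨v, hv, hτv⟩ => ⟨lower ρ v, hD v hv, hτv ▸ hτ.lower_apply v⟩)
    (hsup hD fun _ ⟨v, hv, hτv⟩ => ⟨raise ρ v, hU v hv, hτv ▸ hτ.raise_apply v⟩)
    (hsup hW fun _ ⟨v, hv, hτv⟩ => ⟨-rot ρ v, neg_mem (hW v hv),
      by rw [← hτv, LinearEquiv.coe_coe, map_neg, hτ.rot_apply, neg_neg]⟩) ?_
    ).resolve_left (fun h => hp (eq_bot_iff.mpr (h ▸ le_sup_left)))
  intro v hv
  obtain ⟨x, hx, y, hy, rfl⟩ := mem_sup.mp hv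
  obtain ⟨z, hz, rfl⟩ := hy
  rw [map_add, LinearEquiv.coe_coe, hτ2]
  exact add_mem (mem_sup_right ⟨x, hx, rfl⟩) (mem_sup_left hz)

section Weights

variable {m μ : ℂ} {v : V}

theorem rot_raise_apply_of_eigen (hv : rot ρ v = (I * m) • v) :
    rot ρ (raise ρ v) = (I * (m + 2)) • raise ρ v := by
  rw [rot_raise_apply, hv, map_smul, ← add_smul]
  ring_nf

theorem rot_lower_apply_of_eigen (hv : rot ρ v = (I * m) • v) :
    rot ρ (lower ρ v) = (I * (m - 2)) • lower ρ v := by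
  rw [rot_lower_apply, hv, map_smul, ← sub_smul]
  ring_nf

theorem IntertwinesConj.rot_apply_of_eigen (hτ : IntertwinesConj ρ τ)
    (hv : rot ρ v = (I * m) • v) : rot ρ (τ v) = (I * -m) • τ v := by
  rw [← neg_neg (rot ρ (τ v)), ← hτ.rot_apply, hv, map_smul, ← neg_smul, mul_neg]

theorem raise_lower_apply_of_eigen (hΩ : ∀ w, casimir ρ w = μ • w)
    (hv : rot ρ v = (I * m) • v) :
    raise ρ (lower ρ v) = (μ - m ^ 2 + 2 * m) • v := by
  have h := hΩ v
  rw [casimir_apply, lower_raise_apply, hv, map_smul, hv, smul_smul, smul_smul] at h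
  calc raise ρ (lower ρ v)
        = μ • v - ((2 * I) * (I * m)) • v + ((I * m) * (I * m)) • v := by rw [← h]; module
    _ = (μ - m ^ 2 + 2 * m) • v := by
        match_scalars
        linear_combination (m ^ 2 - 2 * m) * I_mul_I

theorem lower_raise_apply_of_eigen (hΩ : ∀ w, casimir ρ w = μ • w)
    (hv : rot ρ v = (I * m) • v) :
    lower ρ (raise ρ v) = (μ - m ^ 2 - 2 * m) • v := by
  rw [lower_raise_apply, raise_lower_apply_of_eigen hΩ hv, hv, smul_smul, ← add_smul]
  congr 1
  linear_combination 4 * m * I_mul_I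

end Weights

theorem IsIrreducible.exists_casimir_eq_smul (hirr : IsIrreducible ρ τ) (hcenter : ρ 1 = 0)
    (hτ : IntertwinesConj ρ τ) {a : ℂ} {v₀ : V}
    (hv₀ : (rot ρ).eigenspace a = span ℂ {v₀}) (hv₀ne : v₀ ≠ 0) :
    ∃ μ : ℂ, ∀ v, casimir ρ v = μ • v := by
  have hWv₀ : rot ρ v₀ = a • v₀ :=
    Module.End.mem_eigenspace_iff.mp (hv₀ ▸ mem_span_singleton_self v₀)
  have hΩv₀ : casimir ρ v₀ ∈ span ℂ {v₀} := by
    rw [← hv₀, Module.End.mem_eigenspace_iff, ← casimir_rot_apply, hWv₀, map_smul]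
  obtain ⟨μ, hμ⟩ := mem_span_singleton.mp hΩv₀
  have hstab : ∀ {f : Module.End ℂ V}, (∀ w, casimir ρ (f w) = f (casimir ρ w)) →
      ∀ w ∈ (casimir ρ).eigenspace μ, f w ∈ (casimir ρ).eigenspace μ := by
    intro f hf w hw
    rw [Module.End.mem_eigenspace_iff] at hw ⊢
    rw [hf, hw, map_smul]
  have hτstab : ∀ w ∈ (casimir ρ).eigenspace μ, τ w ∈ (casimir ρ).eigenspace μ := by
    intro w hw
    rw [Module.End.mem_eigenspace_iff] at hw ⊢
    rw [← hτ.casimir_apply, hw, map_smul]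
  rcases hirr.eq_bot_or_eq_top hcenter (hstab (casimir_raise_apply ρ))
    (hstab (casimir_lower_apply ρ)) (hstab (casimir_rot_apply ρ)) hτstab with h | h
  · have hv₀mem : v₀ ∈ (casimir ρ).eigenspace μ :=
      Module.End.mem_eigenspace_iff.mpr hμ.symm
    exact absurd (by simpa [h] using hv₀mem) hv₀ne
  · exact ⟨μ, fun v => Module.End.mem_eigenspace_iff.mp (h ▸ mem_top)⟩

theorem casimir_eigenvalue_eq {μ m : ℂ} (hΩ : ∀ v, casimir ρ v = μ • v) {v₀ : V}
    (hv₀ : (rot ρ).eigenspace (I * m) = span ℂ {v₀}) (hv₀ne : v₀ ≠ 0)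
    (hlow : Module.finrank ℂ ((rot ρ).eigenspace (I * (m - 2))) = 0) : μ = m ^ 2 - 2 * m := by
  by_contra hμ
  have hc : μ - m ^ 2 + 2 * m ≠ 0 := fun h => hμ (by linear_combination h)
  have hWv₀ : rot ρ v₀ = (I * m) • v₀ :=
    Module.End.mem_eigenspace_iff.mp (hv₀ ▸ mem_span_singleton_self v₀)
  have hmaps : ∀ x ∈ (rot ρ).eigenspace (I * (m - 2)),
      raise ρ x ∈ (rot ρ).eigenspace (I * m) := by
    intro x hx
    rw [Module.End.mem_eigenspace_iff] at hx ⊢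
    rw [rot_raise_apply_of_eigen hx, sub_add_cancel]
  have hinj : Function.Injective ((raise ρ).restrict hmaps) := by
    refine (injective_iff_map_eq_zero _).mpr fun ⟨x, hx⟩ h0 => ?_
    have hUx : raise ρ x = 0 := congrArg Subtype.val h0
    have h := lower_raise_apply_of_eigen hΩ (Module.End.mem_eigenspace_iff.mp hx)
    rw [hUx, map_zero, eq_comm, smul_eq_zero] at h
    exact Subtype.ext (h.resolve_left fun h' => hc (by linear_combination h'))
  -- `finrank = 0` alone allows an infinite-dimensional eigenspace; `raise` embeds it in a line.
  have : FiniteDimensional ℂ ((rot ρ).eigenspace (I * m)) := hv₀ ▸ inferInstance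
  have := Module.Finite.of_injective _ hinj
  have hDv₀ : lower ρ v₀ ∈ (rot ρ).eigenspace (I * (m - 2)) :=
    Module.End.mem_eigenspace_iff.mpr (rot_lower_apply_of_eigen hWv₀)
  rw [Submodule.finrank_eq_zero.mp hlow, mem_bot] at hDv₀
  have h := raise_lower_apply_of_eigen hΩ hWv₀
  rw [hDv₀, map_zero, eq_comm, smul_eq_zero] at h
  exact hc (h.resolve_right hv₀ne)

section Chain

variable {m μ : ℂ} {v : V}

theorem rot_raise_pow_apply_of_eigen (hv : rot ρ v = (I * m) • v) (n : ℕ) :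
    rot ρ ((raise ρ ^ n) v) = (I * (m + 2 * n)) • (raise ρ ^ n) v := by
  induction n with
  | zero => simpa using hv
  | succ n ih =>
    rw [pow_succ', Module.End.mul_apply, rot_raise_apply_of_eigen ih]
    push_cast
    ring_nf

theorem lower_raise_pow_succ_apply (hΩ : ∀ w, casimir ρ w = μ • w)
    (hv : rot ρ v = (I * m) • v) (n : ℕ) :
    lower ρ ((raise ρ ^ (n + 1)) v) =
      (μ - (m + 2 * n) ^ 2 - 2 * (m + 2 * n)) • (raise ρ ^ n) v := by
  rw [pow_succ', Module.End.mul_apply,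
    lower_raise_apply_of_eigen hΩ (rot_raise_pow_apply_of_eigen hv n)]

theorem IntertwinesConj.rot_chain_apply (hτ : IntertwinesConj ρ τ)
    (hv : rot ρ v = (I * m) • v) (i : ℕ ⊕ ℕ) :
    rot ρ (chain ρ τ v i) = (I * chainWeight m i) • chain ρ τ v i := by
  cases i with
  | inl n => exact rot_raise_pow_apply_of_eigen hv n
  | inr n => exact hτ.rot_apply_of_eigen (rot_raise_pow_apply_of_eigen hv n)

theorem IsIrreducible.span_chain_eq_top (hirr : IsIrreducible ρ τ) (hcenter : ρ 1 = 0)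
    (hτ : IntertwinesConj ρ τ) (hτ2 : ∀ v, τ (τ v) = v)
    (hΩ : ∀ w, casimir ρ w = μ • w) (hv : rot ρ v = (I * m) • v) (hlow : lower ρ v = 0)
    (hne : v ≠ 0) :
    span ℂ (Set.range (chain ρ τ v)) = ⊤ := by
  set P := span ℂ (Set.range fun n => (raise ρ ^ n) v)
  have hmem : ∀ n, (raise ρ ^ n) v ∈ P := fun n => subset_span ⟨n, rfl⟩
  have hstab : ∀ {f : Module.End ℂ V}, (∀ n, f ((raise ρ ^ n) v) ∈ P) →
      ∀ w ∈ P, f w ∈ P :=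
    fun h w hw => (span_le (p := P.comap _)).mpr (by rintro _ ⟨n, rfl⟩; exact h n) hw
  have hP : P ⊔ P.map (τ : V →ₗ[ℂ] V) = ⊤ := by
    refine hirr.sup_map_eq_top hcenter hτ hτ2 (fun h => hne (by simpa [h] using hmem 0))
      (hstab fun n => ?_) (hstab fun n => ?_) (hstab fun n => ?_)
    · rw [← Module.End.mul_apply, ← pow_succ']
      exact hmem _
    · cases n with
      | zero => rw [pow_zero, Module.End.one_apply, hlow]; exact zero_mem _
      | succ n => rw [lower_raise_pow_succ_apply hΩ hv]; exact smul_mem _ _ (hmem n)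
    · rw [rot_raise_pow_apply_of_eigen hv]
      exact smul_mem _ _ (hmem n)
  rw [span_range_chain, hP]

end Chain

theorem IsIrreducible.lower_eq_zero (hirr : IsIrreducible ρ τ) (hcenter : ρ 1 = 0)
    (hτ : IntertwinesConj ρ τ) (hτ2 : ∀ v, τ (τ v) = v) {k : ℕ} (hk : 1 ≤ k)
    (hΩ : ∀ w, casimir ρ w = ((k : ℂ) ^ 2 - 1) • w) {v₀ : V}
    (hv₀ : (rot ρ).eigenspace (I * (k + 1)) = span ℂ {v₀}) : lower ρ v₀ = 0 := by
  have hWv₀ : rot ρ v₀ = (I * (k + 1)) • v₀ :=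
    Module.End.mem_eigenspace_iff.mp (hv₀ ▸ mem_span_singleton_self v₀)
  -- Otherwise `y = τ (lower v₀)` is killed by `lower` and generates `V`, so `v₀` is a multiple of
  -- `raiseᵏ y`, the only vector of weight `k + 1` in its chain, which `lower` kills.
  by_contra hx
  set y := τ (lower ρ v₀)
  have hWy : rot ρ y = (I * (1 - k)) • y := by
    rw [hτ.rot_apply_of_eigen (rot_lower_apply_of_eigen hWv₀)]
    congr 1
    ring
  have hDy : lower ρ y = 0 := by
    rw [← hτ.raise_apply, raise_lower_apply_of_eigen hΩ hWv₀]
    ring_nf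
    rw [zero_smul, map_zero]
  have hy : y ≠ 0 := (LinearEquiv.map_ne_zero_iff τ).mpr hx
  have hv₀mem := Module.End.mem_span_image_of_eigenvalue_eq (hτ.rot_chain_apply hWy)
    (hirr.span_chain_eq_top hcenter hτ hτ2 hΩ hWy hDy hy ▸ mem_top) hWv₀
  have hsub : chain ρ τ y '' {i | I * chainWeight (1 - k) i = I * (k + 1)} ⊆
      {(raise ρ ^ k) y} := by
    rintro _ ⟨n | n, hi, rfl⟩ <;>
      simp only [Set.mem_ofPred_eq, chainWeight, Sum.elim_inl, Sum.elim_inr,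
        mul_right_inj' I_ne_zero] at hi
    · have hn : (n : ℂ) = k := by linear_combination hi / 2
      rw [Nat.cast_injective hn]
      rfl
    · have hn : ((n + 1 : ℕ) : ℂ) = 0 := by
        push_cast
        linear_combination -hi / 2
      exact absurd (Nat.cast_eq_zero.mp hn) n.succ_ne_zero
  obtain ⟨a, ha⟩ := mem_span_singleton.mp (span_mono hsub hv₀mem)
  obtain ⟨j, rfl⟩ : ∃ j, k = j + 1 := ⟨k - 1, by omega⟩
  apply hx
  rw [← ha, map_smul, lower_raise_pow_succ_apply hΩ hWy]
  push_cast
  ring_nf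
  rw [zero_smul, smul_zero]

theorem IntertwinesConj.apply_mem_range_e (hτ : IntertwinesConj ρ τ) {v : V}
    (hv : v ∈ LinearMap.range (ρ !![0, 1; 0, 0])) :
    τ v ∈ LinearMap.range (ρ !![0, 1; 0, 0]) := by
  obtain ⟨w, rfl⟩ := hv
  exact ⟨-τ w, by rw [hτ.e_apply, map_neg]⟩

theorem chainWeight_injective (k : ℕ) :
    Function.Injective fun i => I * chainWeight ((k : ℂ) + 1) i := by
  have hne : ∀ a b : ℕ, (k : ℂ) + 1 + 2 * a ≠ -((k : ℂ) + 1 + 2 * b) := fun a b h => by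
    have : ((a + b + k + 1 : ℕ) : ℂ) = 0 := by push_cast; linear_combination h / 2
    exact absurd (Nat.cast_eq_zero.mp this) (by omega)
  rintro (a | a) (b | b) h <;>
    simp only [chainWeight, Sum.elim_inl, Sum.elim_inr, mul_right_inj' I_ne_zero] at h
  · exact congrArg _ (Nat.cast_injective (by linear_combination h / 2 : (a : ℂ) = b))
  · exact absurd h (hne a b)
  · exact absurd h.symm (hne b a)
  · exact congrArg _ (Nat.cast_injective (by linear_combination -h / 2 : (a : ℂ) = b))

def jacquetCoeff (k n : ℕ) : ℂ := 2 ^ n * (k + 1).ascFactorial n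

theorem jacquetCoeff_zero (k : ℕ) : jacquetCoeff k 0 = 1 := by simp [jacquetCoeff]

theorem jacquetCoeff_succ (k n : ℕ) : jacquetCoeff k (n + 1) =
    2 * (k + 1 + 2 * n) * jacquetCoeff k n - 4 * n * (n + k) * jacquetCoeff k (n - 1) := by
  cases n with
  | zero => simp [jacquetCoeff, Nat.ascFactorial_succ]
  | succ n =>
    simp only [jacquetCoeff, Nat.ascFactorial_succ, Nat.add_sub_cancel, pow_succ]
    push_cast
    ring

section Jacquet

variable {k : ℕ} {v₀ : V}

theorem lower_raise_pow_apply (hΩ : ∀ w, casimir ρ w = ((k : ℂ) ^ 2 - 1) • w)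
    (hWv₀ : rot ρ v₀ = (I * (k + 1)) • v₀) (hDv₀ : lower ρ v₀ = 0) (n : ℕ) :
    lower ρ ((raise ρ ^ n) v₀) = (-4 * n * (n + k) : ℂ) • (raise ρ ^ (n - 1)) v₀ := by
  -- At `n = 0` the coefficient vanishes, so the truncated `n - 1` is harmless.
  cases n with
  | zero => simp [hDv₀]
  | succ n =>
    rw [lower_raise_pow_succ_apply hΩ hWv₀, Nat.add_sub_cancel]
    push_cast
    ring_nf

theorem e_raise_pow_apply (hΩ : ∀ w, casimir ρ w = ((k : ℂ) ^ 2 - 1) • w)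
    (hWv₀ : rot ρ v₀ = (I * (k + 1)) • v₀) (hDv₀ : lower ρ v₀ = 0) (n : ℕ) :
    ρ !![0, 1; 0, 0] ((raise ρ ^ n) v₀) =
      (I * (k + 1 + 2 * n) / 2) • (raise ρ ^ n) v₀
        - (I * n * (n + k)) • (raise ρ ^ (n - 1)) v₀ - (I / 4) • (raise ρ ^ (n + 1)) v₀ := by
  rw [map_e, LinearMap.sub_apply, LinearMap.add_apply, LinearMap.smul_apply,
    LinearMap.smul_apply, LinearMap.smul_apply, rot_raise_pow_apply_of_eigen hWv₀,
    lower_raise_pow_apply hΩ hWv₀ hDv₀, pow_succ', Module.End.mul_apply]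
  match_scalars <;> ring

theorem raise_pow_apply_ne_zero (hΩ : ∀ w, casimir ρ w = ((k : ℂ) ^ 2 - 1) • w)
    (hWv₀ : rot ρ v₀ = (I * (k + 1)) • v₀) (hv₀ne : v₀ ≠ 0) (n : ℕ) :
    (raise ρ ^ n) v₀ ≠ 0 := by
  induction n with
  | zero => simpa using hv₀ne
  | succ n ih =>
    intro h
    have hD := lower_raise_pow_succ_apply hΩ hWv₀ n
    rw [h, map_zero, eq_comm, smul_eq_zero] at hD
    refine hD.elim (fun hc => ?_) ih
    have : ((4 * (n + 1) * (n + k + 1) : ℕ) : ℂ) = 0 := by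
      push_cast
      linear_combination -hc
    exact absurd (Nat.cast_eq_zero.mp this) (by positivity)

theorem IntertwinesConj.linearIndependent_chain (hτ : IntertwinesConj ρ τ)
    (hΩ : ∀ w, casimir ρ w = ((k : ℂ) ^ 2 - 1) • w)
    (hWv₀ : rot ρ v₀ = (I * (k + 1)) • v₀)
    (hv₀ne : v₀ ≠ 0) : LinearIndependent ℂ (chain ρ τ v₀) := by
  refine Module.End.eigenvectors_linearIndependent' (rot ρ) _ (chainWeight_injective k) _
    fun i => ⟨Module.End.mem_eigenspace_iff.mpr (hτ.rot_chain_apply hWv₀ i), ?_⟩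
  cases i with
  | inl n => exact raise_pow_apply_ne_zero hΩ hWv₀ hv₀ne n
  | inr n =>
    exact (LinearEquiv.map_ne_zero_iff τ).mpr (raise_pow_apply_ne_zero hΩ hWv₀ hv₀ne n)

theorem raise_pow_sub_mem_range_e (hΩ : ∀ w, casimir ρ w = ((k : ℂ) ^ 2 - 1) • w)
    (hWv₀ : rot ρ v₀ = (I * (k + 1)) • v₀) (hDv₀ : lower ρ v₀ = 0) (n : ℕ) :
    (raise ρ ^ n) v₀ - jacquetCoeff k n • v₀ ∈ LinearMap.range (ρ !![0, 1; 0, 0]) := by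
  induction n using Nat.strong_induction_on with
  | _ n ih =>
  cases n with
  | zero => simp [jacquetCoeff_zero]
  | succ n =>
    have key : (raise ρ ^ (n + 1)) v₀ - jacquetCoeff k (n + 1) • v₀ =
        (2 * (k + 1 + 2 * n) : ℂ) • ((raise ρ ^ n) v₀ - jacquetCoeff k n • v₀)
        - (4 * n * (n + k) : ℂ) • ((raise ρ ^ (n - 1)) v₀ - jacquetCoeff k (n - 1) • v₀)
        + (4 * I) • ρ !![0, 1; 0, 0] ((raise ρ ^ n) v₀) := by
      rw [e_raise_pow_apply hΩ hWv₀ hDv₀, jacquetCoeff_succ]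
      match_scalars <;> ring_nf <;> rw [I_sq] <;> ring
    rw [key]
    exact add_mem (sub_mem (smul_mem _ _ (ih n (by omega))) (smul_mem _ _ (ih (n - 1) (by omega))))
      (smul_mem _ _ (LinearMap.mem_range_self _ _))

variable {ψ : V →ₗ[ℂ] ℂ}

theorem functional_e_apply_eq_zero (hτ : IntertwinesConj ρ τ)
    (hΩ : ∀ w, casimir ρ w = ((k : ℂ) ^ 2 - 1) • w)
    (hWv₀ : rot ρ v₀ = (I * (k + 1)) • v₀)
    (hDv₀ : lower ρ v₀ = 0) (hspan : span ℂ (Set.range (chain ρ τ v₀)) = ⊤)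
    (hψp : ∀ n, ψ ((raise ρ ^ n) v₀) = jacquetCoeff k n)
    (hψq : ∀ n, ψ (τ ((raise ρ ^ n) v₀)) = 0) (v : V) : ψ (ρ !![0, 1; 0, 0] v) = 0 := by
  suffices ψ ∘ₗ ρ !![0, 1; 0, 0] = 0 from LinearMap.congr_fun this v
  refine LinearMap.ext_on_range hspan fun i => ?_
  rw [LinearMap.comp_apply, LinearMap.zero_apply]
  cases i with
  | inl n =>
    change ψ (ρ !![0, 1; 0, 0] ((raise ρ ^ n) v₀)) = 0
    rw [e_raise_pow_apply hΩ hWv₀ hDv₀, map_sub, map_sub, map_smul, map_smul, map_smul, hψp,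
      hψp, hψp, jacquetCoeff_succ, smul_eq_mul, smul_eq_mul, smul_eq_mul]
    ring
  | inr n =>
    change ψ (ρ !![0, 1; 0, 0] (τ ((raise ρ ^ n) v₀))) = 0
    rw [← neg_neg (ρ !![0, 1; 0, 0] _), ← hτ.e_apply, e_raise_pow_apply hΩ hWv₀ hDv₀]
    simp only [map_neg, map_sub, map_smul, hψq, smul_zero, sub_zero, neg_zero]

theorem sub_sub_mem_range_e (hτ : IntertwinesConj ρ τ) (hτ2 : ∀ v, τ (τ v) = v)
    (hΩ : ∀ w, casimir ρ w = ((k : ℂ) ^ 2 - 1) • w)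
    (hWv₀ : rot ρ v₀ = (I * (k + 1)) • v₀)
    (hDv₀ : lower ρ v₀ = 0) (hspan : span ℂ (Set.range (chain ρ τ v₀)) = ⊤)
    (hψp : ∀ n, ψ ((raise ρ ^ n) v₀) = jacquetCoeff k n)
    (hψq : ∀ n, ψ (τ ((raise ρ ^ n) v₀)) = 0) (v : V) :
    v - ψ v • v₀ - ψ (τ v) • τ v₀ ∈ LinearMap.range (ρ !![0, 1; 0, 0]) := by
  have hψ₀ : ψ v₀ = 1 := by simpa [jacquetCoeff_zero] using hψp 0
  have hψτ₀ : ψ (τ v₀) = 0 := by simpa using hψq 0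
  let f : V →ₗ[ℂ] V :=
    LinearMap.id - ψ.smulRight v₀ - (ψ ∘ₗ (τ : V →ₗ[ℂ] V)).smulRight (τ v₀)
  have hle : span ℂ (Set.range (chain ρ τ v₀)) ≤
      (LinearMap.range (ρ !![0, 1; 0, 0])).comap f := by
    rw [span_le]
    rintro _ ⟨n | n, rfl⟩
    · simpa [f, chain, hψp, hψq] using raise_pow_sub_mem_range_e hΩ hWv₀ hDv₀ n
    · simpa [f, chain, hψp, hψq, hτ2] using
        hτ.apply_mem_range_e (raise_pow_sub_mem_range_e hΩ hWv₀ hDv₀ n)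
  simpa [f] using hle (hspan ▸ mem_top : v ∈ _)

theorem span_pair_sup_range_e_eq_top (hτ : IntertwinesConj ρ τ) (hτ2 : ∀ v, τ (τ v) = v)
    (hΩ : ∀ w, casimir ρ w = ((k : ℂ) ^ 2 - 1) • w)
    (hWv₀ : rot ρ v₀ = (I * (k + 1)) • v₀)
    (hDv₀ : lower ρ v₀ = 0) (hspan : span ℂ (Set.range (chain ρ τ v₀)) = ⊤)
    (hψp : ∀ n, ψ ((raise ρ ^ n) v₀) = jacquetCoeff k n)
    (hψq : ∀ n, ψ (τ ((raise ρ ^ n) v₀)) = 0) :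
    span ℂ {v₀ + τ v₀, v₀ - τ v₀} ⊔ LinearMap.range (ρ !![0, 1; 0, 0]) = ⊤ := by
  refine eq_top_iff.mpr fun v _ => ?_
  have hv : v = ((ψ v + ψ (τ v)) / 2) • (v₀ + τ v₀) + ((ψ v - ψ (τ v)) / 2) • (v₀ - τ v₀)
      + (v - ψ v • v₀ - ψ (τ v) • τ v₀) := by
    module
  rw [hv]
  exact add_mem (mem_sup_left (add_mem (smul_mem _ _ (subset_span (by simp)))
    (smul_mem _ _ (subset_span (by simp)))))
    (mem_sup_right (sub_sub_mem_range_e hτ hτ2 hΩ hWv₀ hDv₀ hspan hψp hψq v))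

theorem eq_zero_of_smul_add_smul_mem_range_e (hτ : IntertwinesConj ρ τ)
    (hτ2 : ∀ v, τ (τ v) = v) (hΩ : ∀ w, casimir ρ w = ((k : ℂ) ^ 2 - 1) • w)
    (hWv₀ : rot ρ v₀ = (I * (k + 1)) • v₀)
    (hDv₀ : lower ρ v₀ = 0) (hspan : span ℂ (Set.range (chain ρ τ v₀)) = ⊤)
    (hψp : ∀ n, ψ ((raise ρ ^ n) v₀) = jacquetCoeff k n)
    (hψq : ∀ n, ψ (τ ((raise ρ ^ n) v₀)) = 0) {a b : ℂ}
    (h : a • (v₀ + τ v₀) + b • (v₀ - τ v₀) ∈ LinearMap.range (ρ !![0, 1; 0, 0])) :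
    a = 0 ∧ b = 0 := by
  have hψ₀ : ψ v₀ = 1 := by simpa [jacquetCoeff_zero] using hψp 0
  have hψτ₀ : ψ (τ v₀) = 0 := by simpa using hψq 0
  obtain ⟨w, hw⟩ := h
  have h₁ := functional_e_apply_eq_zero hτ hΩ hWv₀ hDv₀ hspan hψp hψq w
  have h₂ := functional_e_apply_eq_zero hτ hΩ hWv₀ hDv₀ hspan hψp hψq (-τ w)
  rw [map_neg, ← hτ.e_apply, hw] at h₂
  rw [hw] at h₁
  simp only [map_add, map_sub, map_smul, hτ2, hψ₀, hψτ₀, smul_eq_mul] at h₁ h₂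
  exact ⟨by linear_combination (h₁ + h₂) / 2, by linear_combination (h₁ - h₂) / 2⟩

theorem h_apply_sub_smul_mem_range_e (hcenter : ρ 1 = 0) (hτ : IntertwinesConj ρ τ)
    (hΩ : ∀ w, casimir ρ w = ((k : ℂ) ^ 2 - 1) • w)
    (hWv₀ : rot ρ v₀ = (I * (k + 1)) • v₀)
    (hDv₀ : lower ρ v₀ = 0)
    (hsup : span ℂ {v₀ + τ v₀, v₀ - τ v₀} ⊔ LinearMap.range (ρ !![0, 1; 0, 0]) = ⊤)
    (v : V) :
    ρ !![1, 0; 0, 0] v - (((k : ℂ) + 1) / 2) • v ∈ LinearMap.range (ρ !![0, 1; 0, 0]) := by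
  have hv₀ : ρ !![1, 0; 0, 0] v₀ - (((k : ℂ) + 1) / 2) • v₀ ∈
      LinearMap.range (ρ !![0, 1; 0, 0]) := by
    have h : ρ !![1, 0; 0, 0] v₀ - (((k : ℂ) + 1) / 2) • v₀ =
        (1 / 4 : ℂ) • ((raise ρ ^ 1) v₀ - jacquetCoeff k 1 • v₀) := by
      rw [map_eq_of_map_one_eq_zero ρ hcenter]
      simp [hDv₀, jacquetCoeff, Nat.ascFactorial_succ]
      module
    rw [h]
    exact smul_mem _ _ (raise_pow_sub_mem_range_e hΩ hWv₀ hDv₀ 1)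
  have hτv₀ : ρ !![1, 0; 0, 0] (τ v₀) - (((k : ℂ) + 1) / 2) • τ v₀ ∈
      LinearMap.range (ρ !![0, 1; 0, 0]) := by
    rw [← hτ.h_apply, ← map_smul, ← map_sub]
    exact hτ.apply_mem_range_e hv₀
  refine sub_smul_mem_of_sup_eq_top (fun w hw => ?_) hsup ?_ v
  · obtain ⟨x, rfl⟩ := hw
    rw [map_h_apply_e_apply]
    exact LinearMap.mem_range_self _ _
  · rintro _ (rfl | rfl)
    · rw [map_add, smul_add, add_sub_add_comm]
      exact add_mem hv₀ hτv₀
    · rw [map_sub, smul_sub, sub_sub_sub_comm]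
      exact sub_mem hv₀ hτv₀

theorem e_injective (hτ : IntertwinesConj ρ τ)
    (hΩ : ∀ w, casimir ρ w = ((k : ℂ) ^ 2 - 1) • w)
    (hWv₀ : rot ρ v₀ = (I * (k + 1)) • v₀)
    (hDv₀ : lower ρ v₀ = 0) (hli : LinearIndependent ℂ (chain ρ τ v₀))
    (hspan : span ℂ (Set.range (chain ρ τ v₀)) = ⊤) :
    Function.Injective (ρ !![0, 1; 0, 0]) := by
  set P := span ℂ (Set.range fun n => (raise ρ ^ n) v₀)
  obtain ⟨hliP, -, hdisj⟩ := linearIndependent_sum.mp hli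
  have hker : Disjoint (LinearMap.ker (ρ !![0, 1; 0, 0])) P := by
    refine disjoint_ker_span_range_of_triangular hliP (c := fun _ => -(I / 4))
      (fun _ => by simp [I_ne_zero]) fun n => ?_
    rw [e_raise_pow_apply hΩ hWv₀ hDv₀, neg_smul, sub_neg_eq_add, sub_add_cancel]
    exact sub_mem (smul_mem _ _ (subset_span ⟨n, Set.mem_Iio.mpr (by omega), rfl⟩))
      (smul_mem _ _ (subset_span ⟨n - 1, Set.mem_Iio.mpr (by omega), rfl⟩))
  have hEP : ∀ w ∈ P, ρ !![0, 1; 0, 0] w ∈ P := by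
    refine fun w hw => (span_le (p := P.comap _)).mpr ?_ hw
    rintro _ ⟨n, rfl⟩
    rw [SetLike.mem_coe, mem_comap, e_raise_pow_apply hΩ hWv₀ hDv₀]
    exact sub_mem (sub_mem (smul_mem _ _ (subset_span ⟨n, rfl⟩))
      (smul_mem _ _ (subset_span ⟨n - 1, rfl⟩))) (smul_mem _ _ (subset_span ⟨n + 1, rfl⟩))
  have hPQ : Disjoint P (P.map (τ : V →ₗ[ℂ] V)) := by
    rwa [map_span, ← Set.range_comp]
  rw [← LinearMap.ker_eq_bot, eq_bot_iff]
  intro u hu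
  have hPQtop : P ⊔ P.map (τ : V →ₗ[ℂ] V) = ⊤ := span_range_chain ρ τ v₀ ▸ hspan
  obtain ⟨a, ha, _, ⟨b, hb, rfl⟩, rfl⟩ := mem_sup.mp (hPQtop ▸ mem_top : u ∈ _)
  rw [LinearMap.mem_ker, map_add, LinearEquiv.coe_coe, ← neg_neg (ρ !![0, 1; 0, 0] (τ b)),
    ← hτ.e_apply, add_neg_eq_zero] at hu
  have hEa : ρ !![0, 1; 0, 0] a = 0 :=
    disjoint_def.mp hPQ _ (hEP a ha) (hu ▸ ⟨_, hEP b hb, rfl⟩)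
  have hEb : ρ !![0, 1; 0, 0] b = 0 := by rwa [hEa, eq_comm, LinearEquiv.map_eq_zero_iff] at hu
  rw [disjoint_def.mp hker a hEa ha, disjoint_def.mp hker b hEb hb, map_zero, add_zero]
  exact zero_mem _

theorem jacquet_of_lowest_weight (hcenter : ρ 1 = 0) (hτ : IntertwinesConj ρ τ)
    (hτ2 : ∀ v, τ (τ v) = v) (hΩ : ∀ w, casimir ρ w = ((k : ℂ) ^ 2 - 1) • w)
    (hWv₀ : rot ρ v₀ = (I * (k + 1)) • v₀) (hDv₀ : lower ρ v₀ = 0) (hv₀ne : v₀ ≠ 0)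
    (hspan : span ℂ (Set.range (chain ρ τ v₀)) = ⊤) :
    Module.finrank ℂ (V ⧸ LinearMap.range (ρ !![0, 1; 0, 0])) = 2 ∧
    (∀ v : V, ρ !![1, 0; 0, 0] v - (((k : ℂ) + 1) / 2) • v ∈
      LinearMap.range (ρ !![0, 1; 0, 0])) ∧
    (∀ v : V, ρ !![0, 0; 0, 1] v + (((k : ℂ) + 1) / 2) • v ∈
      LinearMap.range (ρ !![0, 1; 0, 0])) ∧
    (∃ u₁ u₂ : V,
      (span ℂ {u₁, u₂} ⊔ LinearMap.range (ρ !![0, 1; 0, 0]) = ⊤) ∧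
      (∀ a b : ℂ, a • u₁ + b • u₂ ∈ LinearMap.range (ρ !![0, 1; 0, 0]) →
        a = 0 ∧ b = 0) ∧
      τ u₁ - u₁ ∈ LinearMap.range (ρ !![0, 1; 0, 0]) ∧
      τ u₂ + u₂ ∈ LinearMap.range (ρ !![0, 1; 0, 0])) ∧
    Function.Injective (ρ !![0, 1; 0, 0]) := by
  have hli := hτ.linearIndependent_chain hΩ hWv₀ hv₀ne
  obtain ⟨ψ, hψ⟩ := hli.exists_linearMap_apply_eq hspan (Sum.elim (jacquetCoeff k) 0)
  have hψp : ∀ n, ψ ((raise ρ ^ n) v₀) = jacquetCoeff k n := fun n => hψ (.inl n)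
  have hψq : ∀ n, ψ (τ ((raise ρ ^ n) v₀)) = 0 := fun n => hψ (.inr n)
  have hsup := span_pair_sup_range_e_eq_top hτ hτ2 hΩ hWv₀ hDv₀ hspan hψp hψq
  have hind : ∀ a b : ℂ, a • (v₀ + τ v₀) + b • (v₀ - τ v₀) ∈
      LinearMap.range (ρ !![0, 1; 0, 0]) → a = 0 ∧ b = 0 := fun _ _ =>
    eq_zero_of_smul_add_smul_mem_range_e hτ hτ2 hΩ hWv₀ hDv₀ hspan hψp hψq
  have hh := h_apply_sub_smul_mem_range_e hcenter hτ hΩ hWv₀ hDv₀ hsup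
  refine ⟨finrank_quotient_eq_two hsup hind, hh, fun v => ?_,
    ⟨_, _, hsup, hind, ?_, ?_⟩, e_injective hτ hΩ hWv₀ hDv₀ hli hspan⟩
  · rw [map_diag_eq_neg ρ hcenter, LinearMap.neg_apply, neg_add_eq_sub, ← neg_sub, neg_mem_iff]
    exact hh v
  · rw [map_add, hτ2, add_comm, sub_self]
    exact zero_mem _
  · rw [map_sub, hτ2, sub_add_sub_cancel', sub_self]
    exact zero_mem _

end Jacquet

end GL2

open GL2 in
theorem jacquet_module_of_discrete_series_general
    (k : ℕ) (hk : 1 ≤ k)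
    (V : Type) [AddCommGroup V] [Module ℂ V]
    (ρ : Matrix (Fin 2) (Fin 2) ℂ →ₗ⁅ℂ⁆ Module.End ℂ V)
    (τ : V ≃ₗ[ℂ] V)
    (hτ2 : ∀ v : V, τ (τ v) = v)
    (hτρ : ∀ (A : Matrix (Fin 2) (Fin 2) ℂ) (v : V),
      τ (ρ A v) = ρ (!![1, 0; 0, -1] * A * !![1, 0; 0, -1]) (τ v))
    (hcenter : ρ 1 = 0)
    (hweights : ∀ m : ℤ,
      Module.finrank ℂ (Module.End.eigenspace (ρ !![0, 1; -1, 0]) (Complex.I * m)) =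
        if ((k : ℤ) + 1 ≤ |m| ∧ (m - ((k : ℤ) + 1)) % 2 = 0) then 1 else 0)
    (hirred : ∀ p : Submodule ℂ V,
      (∀ (A : Matrix (Fin 2) (Fin 2) ℂ), ∀ v ∈ p, ρ A v ∈ p) →
      (∀ v ∈ p, τ v ∈ p) → p = ⊥ ∨ p = ⊤) :
    Module.finrank ℂ
        (V ⧸ Submodule.span ℂ {w : V | ∃ v : V, w = ρ !![0, 1; 0, 0] v}) = 2 ∧
    (∀ v : V, ρ !![1, 0; 0, 0] v - (((k : ℂ) + 1) / 2) • v ∈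
        Submodule.span ℂ {w : V | ∃ v : V, w = ρ !![0, 1; 0, 0] v}) ∧
    (∀ v : V, ρ !![0, 0; 0, 1] v + (((k : ℂ) + 1) / 2) • v ∈
        Submodule.span ℂ {w : V | ∃ v : V, w = ρ !![0, 1; 0, 0] v}) ∧
    (∃ u₁ u₂ : V,
      (Submodule.span ℂ {u₁, u₂} ⊔
          Submodule.span ℂ {w : V | ∃ v : V, w = ρ !![0, 1; 0, 0] v} = ⊤) ∧
      (∀ a b : ℂ, a • u₁ + b • u₂ ∈
          Submodule.span ℂ {w : V | ∃ v : V, w = ρ !![0, 1; 0, 0] v} → a = 0 ∧ b = 0) ∧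
      τ u₁ - u₁ ∈ Submodule.span ℂ {w : V | ∃ v : V, w = ρ !![0, 1; 0, 0] v} ∧
      τ u₂ + u₂ ∈ Submodule.span ℂ {w : V | ∃ v : V, w = ρ !![0, 1; 0, 0] v}) ∧
    Function.Injective (ρ !![0, 1; 0, 0] : V →ₗ[ℂ] V) := by
  rw [span_setOf_eq_apply_eq_range]
  have htop : Module.finrank ℂ ((rot ρ).eigenspace (I * ((k : ℂ) + 1))) = 1 := by
    have h := hweights (k + 1)
    rw [show (((k : ℤ) + 1 : ℤ) : ℂ) = (k : ℂ) + 1 by push_cast; ring] at h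
    rw [rot, h, if_pos ⟨(abs_of_nonneg (by positivity)).ge, by simp⟩]
  have hlow : Module.finrank ℂ ((rot ρ).eigenspace (I * ((k : ℂ) + 1 - 2))) = 0 := by
    have h := hweights (k - 1)
    rw [show (((k : ℤ) - 1 : ℤ) : ℂ) = (k : ℂ) - 1 by push_cast; ring] at h
    rw [rot, show (k : ℂ) + 1 - 2 = k - 1 by ring, h, if_neg]
    rintro ⟨h, -⟩
    rw [abs_of_nonneg (by omega)] at h
    omega
  obtain ⟨v₀, hv₀ne, hv₀⟩ := exists_eq_span_singleton_of_finrank_eq_one htop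
  obtain ⟨μ, hΩ⟩ := IsIrreducible.exists_casimir_eq_smul hirred hcenter hτρ hv₀ hv₀ne
  obtain rfl : μ = (k : ℂ) ^ 2 - 1 := by
    linear_combination casimir_eigenvalue_eq hΩ hv₀ hv₀ne hlow
  have hWv₀ : rot ρ v₀ = (I * (k + 1)) • v₀ :=
    Module.End.mem_eigenspace_iff.mp (hv₀ ▸ mem_span_singleton_self v₀)
  have hDv₀ := IsIrreducible.lower_eq_zero hirred hcenter hτρ hτ2 hk hΩ hv₀
  exact jacquet_of_lowest_weight hcenter hτρ hτ2 hΩ hWv₀ hDv₀ hv₀ne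
    (IsIrreducible.span_chain_eq_top hirred hcenter hτρ hτ2 hΩ hWv₀ hDv₀ hv₀ne)

/-- Let `D_k` be the discrete series representation of `GL₂(ℝ)` with
central character `sgn^{k+1}` and minimal `K`-type of highest weight `k+1`; its underlying
`(𝔤, K)`-module is axiomatized below: `V` is a module over `𝔤 = gl₂(ℂ)` (via `ρ`), with
the action `τ` of `diag(1,−1) ∈ O(2)`, whose `SO(2)`-weights (eigenvalues `i·m` of the
rotation generator `!![0,1;-1,0]`) are exactly the `m` with `|m| ≥ k+1`, `m ≡ k+1 (mod 2)`,
each with multiplicity one, with the derived central action zero, and irreducible.  Then,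
with `N = 𝔫·V` the span of `ρ(e)V` (`e = !![0,1;0,0]` spanning the Lie algebra of `N₂`),
the Jacquet module `H₀(N₂, D_k) = V/N` is two-dimensional; the split torus Lie algebra
acts on it by the exponents `(k+1)/2` and `−(k+1)/2` (i.e. by `|·|^{(k+1)/2} ⊠
|·|^{−(k+1)/2}` on both lines), and the two lines are exchanged into the claimed
characters `(ε|·|^{(k+1)/2} ⊠ |·|^{−(k+1)/2}) ⊕ (ε·sgn·|·|^{(k+1)/2} ⊠ sgn·|·|^{−(k+1)/2})`
by the `τ`-eigenvalues `+1` and `−1`.  Moreover all higher `N₂`-homology vanishes, i.e.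
`ρ(e)` is injective (`H₁(𝔫, D_k) = ker ρ(e) = 0` for the one-dimensional `𝔫`). -/
theorem jacquet_module_of_discrete_series
    (k : ℕ) (hk : 1 ≤ k)
    (V : Type) [AddCommGroup V] [Module ℂ V]
    (ρ : Matrix (Fin 2) (Fin 2) ℂ →ₗ⁅ℂ⁆ Module.End ℂ V)
    (τ : V ≃ₗ[ℂ] V)
    (hτ2 : ∀ v : V, τ (τ v) = v)
    (hτρ : ∀ (A : Matrix (Fin 2) (Fin 2) ℂ) (v : V),
      τ (ρ A v) = ρ (!![1, 0; 0, -1] * A * !![1, 0; 0, -1]) (τ v))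
    (hcenter : ρ 1 = 0)
    (hweights : ∀ m : ℤ,
      Module.finrank ℂ (Module.End.eigenspace (ρ !![0, 1; -1, 0]) (Complex.I * m)) =
        if ((k : ℤ) + 1 ≤ |m| ∧ (m - ((k : ℤ) + 1)) % 2 = 0) then 1 else 0)
    (hspan : (⨆ m : ℤ, Module.End.eigenspace (ρ !![0, 1; -1, 0]) (Complex.I * m)) = ⊤)
    (hirred : ∀ p : Submodule ℂ V,
      (∀ (A : Matrix (Fin 2) (Fin 2) ℂ), ∀ v ∈ p, ρ A v ∈ p) →
      (∀ v ∈ p, τ v ∈ p) → p = ⊥ ∨ p = ⊤) :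
    Module.finrank ℂ
        (V ⧸ Submodule.span ℂ {w : V | ∃ v : V, w = ρ !![0, 1; 0, 0] v}) = 2 ∧
    (∀ v : V, ρ !![1, 0; 0, 0] v - (((k : ℂ) + 1) / 2) • v ∈
        Submodule.span ℂ {w : V | ∃ v : V, w = ρ !![0, 1; 0, 0] v}) ∧
    (∀ v : V, ρ !![0, 0; 0, 1] v + (((k : ℂ) + 1) / 2) • v ∈
        Submodule.span ℂ {w : V | ∃ v : V, w = ρ !![0, 1; 0, 0] v}) ∧
    (∃ u₁ u₂ : V,
      (Submodule.span ℂ {u₁, u₂} ⊔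
          Submodule.span ℂ {w : V | ∃ v : V, w = ρ !![0, 1; 0, 0] v} = ⊤) ∧
      (∀ a b : ℂ, a • u₁ + b • u₂ ∈
          Submodule.span ℂ {w : V | ∃ v : V, w = ρ !![0, 1; 0, 0] v} → a = 0 ∧ b = 0) ∧
      τ u₁ - u₁ ∈ Submodule.span ℂ {w : V | ∃ v : V, w = ρ !![0, 1; 0, 0] v} ∧
      τ u₂ + u₂ ∈ Submodule.span ℂ {w : V | ∃ v : V, w = ρ !![0, 1; 0, 0] v}) ∧
    Function.Injective (ρ !![0, 1; 0, 0] : V →ₗ[ℂ] V) :=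
  jacquet_module_of_discrete_series_general k hk V ρ τ hτ2 hτρ hcenter hweights hirred
end

section
/- Let P ⊂ GL₄(ℝ) be the standard parabolic of type (2,2), S₄ the Shalika subgroup {diag(g,g)·(I + (0 b; 0 0)) : g ∈ GL₂(ℝ), b ∈ M₂(ℝ)}, and X = P\GL₄(ℝ). Then there are exactly four S₄-orbits on X, represented by the permutation matrices attached to σ₁ = (1,2,3,4), σ₂ = (1,3,2,4), σ₃ = (3,1,2,4), σ₄ = (3,4,1,2) in S₄, and the orbit of σ₄ is open; moreover the stabilizer P^{σ₄} ∩ S₄ is isomorphic to GL₂(ℝ) embedded diagonally. -/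
open Matrix

noncomputable section

/-- The block upper-triangular `(2,2)` standard parabolic `P ⊂ GL₄(ℝ)` (as a subset). -/
def Pset : Set (GL (Fin 4) ℝ) :=
  {g | ∀ i j : Fin 4, 2 ≤ (i : ℕ) → (j : ℕ) < 2 →
    (g : Matrix (Fin 4) (Fin 4) ℝ) i j = 0}

/-- The Shalika subgroup `S₄ = {diag(a,a)·(1 b; 0 1)} ⊂ GL₄(ℝ)` (as a subset): the
invertible block matrices of the form `(a, c; 0, a)`. -/
def Sset : Set (GL (Fin 4) ℝ) :=
  {g | (∀ i j : Fin 4, 2 ≤ (i : ℕ) → (j : ℕ) < 2 →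
          (g : Matrix (Fin 4) (Fin 4) ℝ) i j = 0) ∧
       (∀ i j : Fin 4, (i : ℕ) < 2 → (j : ℕ) < 2 →
          (g : Matrix (Fin 4) (Fin 4) ℝ) i j =
            (g : Matrix (Fin 4) (Fin 4) ℝ) (i + 2) (j + 2))}

/-- The permutation matrix of `σ` (convention `ω E_{j,k} ω⁻¹ = E_{σ(j),σ(k)}`, i.e. the
matrix with `1` in position `(σ(j), j)`). -/
def permMat (σ : Equiv.Perm (Fin 4)) : Matrix (Fin 4) (Fin 4) ℝ :=
  fun i j => if i = σ j then 1 else 0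

lemma permMat_mul_inv (σ : Equiv.Perm (Fin 4)) : permMat σ * permMat σ⁻¹ = 1 := by
  ext i j
  simp only [permMat, Matrix.mul_apply, Matrix.one_apply, mul_ite, mul_one, mul_zero,
    ite_mul, one_mul, zero_mul]
  rw [Finset.sum_ite_eq' Finset.univ (σ⁻¹ j)]
  simp [Equiv.apply_eq_iff_eq_symm_apply, eq_comm]

/-- The permutation matrix of `σ` as an element of `GL₄(ℝ)`. -/
def permGL (σ : Equiv.Perm (Fin 4)) : GL (Fin 4) ℝ :=
  ⟨permMat σ, permMat σ⁻¹, permMat_mul_inv σ, by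
    simpa using permMat_mul_inv σ⁻¹⟩

/-- The permutations `σ₁ = (1,2,3,4)`, `σ₂ = (1,3,2,4)`, `σ₃ = (3,1,2,4)`,
`σ₄ = (3,4,1,2)` (one-line notation, `σ(k) = iₖ`), written 0-based. -/
def σs : Fin 4 → Equiv.Perm (Fin 4)
  | 0 => 1
  | 1 => Equiv.swap 1 2
  | 2 => Equiv.swap 0 1 * Equiv.swap 0 2
  | 3 => Equiv.swap 0 2 * Equiv.swap 1 3

/-- The corresponding representatives in `GL₄(ℝ)`. -/
def w (i : Fin 4) : GL (Fin 4) ℝ := permGL (σs i)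

/-!
Write `g ∈ GL₄` in `2 × 2` blocks. As `P` is block upper triangular, the coset `P g` is determined
by the bottom block row `(C | D)` of `g` up to left multiplication by `GL₂`, and `s = (a c; 0 a)`
in `S₄` sends it to `(C a | C c + D a)`. The three conditions `det C = 0`, `C = 0` and, when
`det C = 0`, `adj C * D * adj C = 0` are invariant under this action; for `C` of rank one the last
one says that the line `{x | (0, x) ∈ rowspace (C | D)}` lies in the row space of `C`. Row and
column operations bring every full-rank `(C | D)` to the bottom row of one of the `w i`, and the
open orbit is `det C ≠ 0`. Conjugation by `w 3` swaps the two diagonal blocks, so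
`P^{σ₄} ∩ S₄` consists of the `diag(a, a)`.
-/

open DoubleCoset

theorem MulEquiv.mem_doubleCoset_preimage_iff {G H : Type*} [Group G] [Group H] (e : G ≃* H)
    (s t : Set H) (a g : G) :
    g ∈ doubleCoset a (e ⁻¹' s) (e ⁻¹' t) ↔ e g ∈ doubleCoset (e a) s t := by
  simp only [mem_doubleCoset]
  constructor
  · rintro ⟨x, hx, y, hy, rfl⟩
    exact ⟨e x, hx, e y, hy, by simp only [map_mul]⟩
  · rintro ⟨x, hx, y, hy, h⟩
    refine ⟨e.symm x, by simpa using hx, e.symm y, by simpa using hy, e.injective ?_⟩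
    simp [h]

theorem Matrix.toRows₂_mul {m₁ m₂ k l R : Type*} [Fintype k] [NonUnitalNonAssocSemiring R]
    (A : Matrix (m₁ ⊕ m₂) k R) (B : Matrix k l R) : (A * B).toRows₂ = A.toRows₂ * B :=
  rfl

section BlockMatrices

variable {n R : Type*} [Fintype n] [DecidableEq n] [CommRing R]

variable (n R) in
def blockParabolic : Set (GL (n ⊕ n) R) :=
  {g | (g : Matrix (n ⊕ n) (n ⊕ n) R).toBlocks₂₁ = 0}

variable (n R) in
def blockShalika : Set (GL (n ⊕ n) R) :=
  {g | ∃ a c : Matrix n n R, (g : Matrix (n ⊕ n) (n ⊕ n) R) = fromBlocks a c 0 a}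

@[simp]
theorem mem_blockParabolic (g : GL (n ⊕ n) R) :
    g ∈ blockParabolic n R ↔ (g : Matrix (n ⊕ n) (n ⊕ n) R).toBlocks₂₁ = 0 :=
  Iff.rfl

def ShalikaRel (X Y : Matrix n (n ⊕ n) R) : Prop :=
  ∃ h a c : Matrix n n R, IsUnit h ∧ IsUnit a ∧ Y = h * X * fromBlocks a c 0 a

theorem toBlocks₂₁_mul_inv_eq_zero_iff (G V : GL (n ⊕ n) R) :
    ((G * V⁻¹ : GL (n ⊕ n) R) : Matrix (n ⊕ n) (n ⊕ n) R).toBlocks₂₁ = 0 ↔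
      ∃ h : Matrix n n R, IsUnit h ∧
        (G : Matrix (n ⊕ n) (n ⊕ n) R).toRows₂ = h * (V : Matrix (n ⊕ n) (n ⊕ n) R).toRows₂ := by
  set Q : Matrix (n ⊕ n) (n ⊕ n) R := ((G * V⁻¹ : GL (n ⊕ n) R) : Matrix (n ⊕ n) (n ⊕ n) R)
  have hQ : Q.toRows₂ = fromCols Q.toBlocks₂₁ Q.toBlocks₂₂ := by ext i (j | j) <;> rfl
  have hG : (G : Matrix (n ⊕ n) (n ⊕ n) R) = Q * V := by simp [Q]
  constructor
  · intro h21
    refine ⟨Q.toBlocks₂₂, ?_, ?_⟩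
    · have hQu : IsUnit Q := (G * V⁻¹).isUnit
      rw [← fromBlocks_toBlocks Q, h21, isUnit_fromBlocks_zero₂₁] at hQu
      exact hQu.2
    · rw [hG, Matrix.toRows₂_mul, hQ, h21, ← fromRows_toRows (V : Matrix (n ⊕ n) (n ⊕ n) R),
        fromCols_mul_fromRows, toRows₂_fromRows, Matrix.zero_mul, zero_add]
  · rintro ⟨h, -, hGV⟩
    have : Q.toRows₂ = h * (1 : Matrix (n ⊕ n) (n ⊕ n) R).toRows₂ := by
      rw [show Q = G * (V⁻¹ : GL (n ⊕ n) R) from rfl, Matrix.toRows₂_mul, hGV, Matrix.mul_assoc,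
        ← Matrix.toRows₂_mul, ← Units.val_mul, mul_inv_cancel, Units.val_one]
    rw [show Q.toBlocks₂₁ = Q.toRows₂.toCols₁ from rfl, this]
    ext i j
    simp [Matrix.mul_apply]

theorem exists_mem_blockShalika_iff (Φ : Matrix (n ⊕ n) (n ⊕ n) R → Prop) :
    (∃ s ∈ blockShalika n R, Φ s) ↔ ∃ a c : Matrix n n R, IsUnit a ∧ Φ (fromBlocks a c 0 a) := by
  constructor
  · rintro ⟨s, ⟨a, c, hs⟩, hΦ⟩
    have hsu := s.isUnit
    rw [hs, isUnit_fromBlocks_zero₂₁] at hsu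
    exact ⟨a, c, hsu.1, hs ▸ hΦ⟩
  · rintro ⟨a, c, ha, hΦ⟩
    have hu : IsUnit (fromBlocks a c 0 a) := isUnit_fromBlocks_zero₂₁.2 ⟨ha, ha⟩
    exact ⟨hu.unit, ⟨a, c, hu.unit_spec⟩, hΦ⟩

theorem mem_doubleCoset_iff_shalikaRel (W G : GL (n ⊕ n) R) :
    G ∈ doubleCoset W (blockParabolic n R) (blockShalika n R) ↔
      ShalikaRel (W : Matrix (n ⊕ n) (n ⊕ n) R).toRows₂ (G : Matrix (n ⊕ n) (n ⊕ n) R).toRows₂ := by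
  have hP (s : GL (n ⊕ n) R) : G * (W * s)⁻¹ ∈ blockParabolic n R ↔
      ∃ h : Matrix n n R, IsUnit h ∧ (G : Matrix (n ⊕ n) (n ⊕ n) R).toRows₂ =
        h * (W : Matrix (n ⊕ n) (n ⊕ n) R).toRows₂ * (s : Matrix (n ⊕ n) (n ⊕ n) R) := by
    rw [mem_blockParabolic, toBlocks₂₁_mul_inv_eq_zero_iff, Units.val_mul, Matrix.toRows₂_mul]
    simp only [Matrix.mul_assoc]
  calc G ∈ doubleCoset W (blockParabolic n R) (blockShalika n R)
      ↔ ∃ s ∈ blockShalika n R, G * (W * s)⁻¹ ∈ blockParabolic n R := by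
        rw [mem_doubleCoset]
        constructor
        · rintro ⟨p, hp, s, hs, rfl⟩
          exact ⟨s, hs, by simpa [mul_assoc] using hp⟩
        · rintro ⟨s, hs, hp⟩
          exact ⟨_, hp, s, hs, by group⟩
    _ ↔ ∃ a c : Matrix n n R, IsUnit a ∧ ∃ h : Matrix n n R, IsUnit h ∧
        (G : Matrix (n ⊕ n) (n ⊕ n) R).toRows₂ =
          h * (W : Matrix (n ⊕ n) (n ⊕ n) R).toRows₂ * fromBlocks a c 0 a := by
        simp only [hP]
        exact exists_mem_blockShalika_iff fun s => ∃ h : Matrix n n R, IsUnit h ∧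
          (G : Matrix (n ⊕ n) (n ⊕ n) R).toRows₂ = h * (W : Matrix (n ⊕ n) (n ⊕ n) R).toRows₂ * s
    _ ↔ ShalikaRel (W : Matrix (n ⊕ n) (n ⊕ n) R).toRows₂
        (G : Matrix (n ⊕ n) (n ⊕ n) R).toRows₂ := by
        constructor
        · rintro ⟨a, c, ha, h, hh, hG⟩
          exact ⟨h, a, c, hh, ha, hG⟩
        · rintro ⟨h, a, c, hh, ha, hG⟩
          exact ⟨a, c, ha, h, hh, hG⟩

theorem mem_blockShalika_iff (g : GL (n ⊕ n) R) :
    g ∈ blockShalika n R ↔ (g : Matrix (n ⊕ n) (n ⊕ n) R).toBlocks₂₁ = 0 ∧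
      (g : Matrix (n ⊕ n) (n ⊕ n) R).toBlocks₁₁ = (g : Matrix (n ⊕ n) (n ⊕ n) R).toBlocks₂₂ := by
  constructor
  · rintro ⟨a, c, hg⟩
    simp [hg]
  · rintro ⟨h₂₁, h₁₁⟩
    refine ⟨(g : Matrix (n ⊕ n) (n ⊕ n) R).toBlocks₁₁, (g : Matrix (n ⊕ n) (n ⊕ n) R).toBlocks₁₂,
      ?_⟩
    conv_lhs => rw [← fromBlocks_toBlocks (g : Matrix (n ⊕ n) (n ⊕ n) R), h₂₁, ← h₁₁]

theorem injective_vecMul_toRows₂ (G : GL (n ⊕ n) R) :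
    Function.Injective (G : Matrix (n ⊕ n) (n ⊕ n) R).toRows₂.vecMul := by
  have hG (y : n → R) : y ᵥ* (G : Matrix (n ⊕ n) (n ⊕ n) R).toRows₂ =
      Sum.elim 0 y ᵥ* (G : Matrix (n ⊕ n) (n ⊕ n) R) := by
    ext j
    simp [vecMul, dotProduct, Fintype.sum_sum_type]
  intro y₁ y₂ hy
  have := vecMul_injective_of_isUnit G.isUnit (by simpa only [hG] using hy)
  exact funext fun i => congrFun this (Sum.inr i)

theorem swap_mul_fromBlocks_mul_swap (A B C D : Matrix n n R) :
    fromBlocks 0 1 1 0 * fromBlocks A B C D * fromBlocks 0 1 1 0 = fromBlocks D C B A := by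
  simp [fromBlocks_multiply]

theorem swap_conj_mem_blockParabolic_and_mem_blockShalika_iff (J X : GL (n ⊕ n) R)
    (hJ : (J : Matrix (n ⊕ n) (n ⊕ n) R) = fromBlocks 0 1 1 0) :
    J * X * J⁻¹ ∈ blockParabolic n R ∧ X ∈ blockShalika n R ↔
      ∃ a : GL n R, (X : Matrix (n ⊕ n) (n ⊕ n) R) = fromBlocks a 0 0 a := by
  have hJinv : J⁻¹ = J := inv_eq_of_mul_eq_one_right <| Units.ext <| by
    simp [hJ, fromBlocks_multiply, fromBlocks_one]
  obtain ⟨A, B, C, D, hX⟩ : ∃ A B C D, (X : Matrix (n ⊕ n) (n ⊕ n) R) = fromBlocks A B C D :=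
    ⟨_, _, _, _, (fromBlocks_toBlocks _).symm⟩
  rw [mem_blockParabolic, mem_blockShalika_iff, hJinv, Units.val_mul, Units.val_mul, hJ, hX,
    swap_mul_fromBlocks_mul_swap]
  simp only [toBlocks_fromBlocks₂₁, toBlocks_fromBlocks₁₁, toBlocks_fromBlocks₂₂, fromBlocks_inj]
  constructor
  · rintro ⟨rfl, rfl, rfl⟩
    have hA := X.isUnit
    rw [hX, isUnit_fromBlocks_zero₂₁] at hA
    exact ⟨hA.1.unit, rfl, rfl, rfl, rfl⟩
  · rintro ⟨a, rfl, rfl, rfl, rfl⟩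
    exact ⟨rfl, rfl, rfl⟩

end BlockMatrices

section Invariants

variable {n R : Type*} [Fintype n] [DecidableEq n] [CommRing R]

theorem shalikaRel_fromCols_iff {C D C' D' : Matrix n n R} :
    ShalikaRel (fromCols C D) (fromCols C' D') ↔ ∃ h a c : Matrix n n R, IsUnit h ∧ IsUnit a ∧
      C' = h * C * a ∧ D' = h * C * c + h * D * a := by
  simp only [ShalikaRel, mul_fromCols, fromCols_mul_fromBlocks, fromCols_ext_iff, Matrix.mul_zero,
    add_zero]

theorem ShalikaRel.trans {X Y Z : Matrix n (n ⊕ n) R} (hXY : ShalikaRel X Y)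
    (hYZ : ShalikaRel Y Z) : ShalikaRel X Z := by
  obtain ⟨h, a, c, hh, ha, rfl⟩ := hXY
  obtain ⟨h', a', c', hh', ha', rfl⟩ := hYZ
  refine ⟨h' * h, a * a', a * c' + c * a', hh'.mul hh, ha.mul ha', ?_⟩
  simp only [Matrix.mul_assoc, fromBlocks_multiply, Matrix.mul_zero, Matrix.zero_mul, add_zero,
    zero_add]

theorem ShalikaRel.injective_vecMul {X Y : Matrix n (n ⊕ n) R} (hXY : ShalikaRel X Y)
    (hY : Function.Injective Y.vecMul) : Function.Injective X.vecMul := by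
  obtain ⟨h, a, c, hh, -, rfl⟩ := hXY
  have key (x : n → R) :
      (x ᵥ* h⁻¹) ᵥ* (h * X * fromBlocks a c 0 a) = (x ᵥ* X) ᵥ* fromBlocks a c 0 a := by
    rw [vecMul_vecMul, ← Matrix.mul_assoc, ← Matrix.mul_assoc,
      nonsing_inv_mul _ ((isUnit_iff_isUnit_det h).1 hh), Matrix.one_mul, vecMul_vecMul]
  intro x₁ x₂ hx
  refine vecMul_injective_of_isUnit (isUnit_nonsing_inv_iff.2 hh) (hY ?_)
  simp only [key]
  exact congrArg (· ᵥ* fromBlocks a c 0 a) hx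

open Classical in
def orbitType (X : Matrix n (n ⊕ n) R) : Fin 4 :=
  if X.toCols₁.det ≠ 0 then 3
  else if X.toCols₁ = 0 then 0
  else if adjugate X.toCols₁ * X.toCols₂ * adjugate X.toCols₁ = 0 then 1
  else 2

theorem adjugate_sandwich_of_det_eq_zero {C D h a c : Matrix n n R} (hC : C.det = 0) :
    adjugate (h * C * a) * (h * C * c + h * D * a) * adjugate (h * C * a) =
      (h.det * a.det) • (adjugate a * (adjugate C * D * adjugate C) * adjugate h) := by
  have hh : adjugate h * (h * C * c + h * D * a) = h.det • (C * c + D * a) := by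
    simp only [Matrix.mul_add, ← Matrix.mul_assoc, adjugate_mul, Matrix.smul_mul, Matrix.one_mul,
      smul_add]
  have hCC : adjugate C * (C * c + D * a) = adjugate C * D * a := by
    simp only [Matrix.mul_add, ← Matrix.mul_assoc, adjugate_mul, hC, zero_smul, Matrix.zero_mul,
      zero_add]
  calc adjugate (h * C * a) * (h * C * c + h * D * a) * adjugate (h * C * a)
      = adjugate a * adjugate C * (adjugate h * (h * C * c + h * D * a)) *
          (adjugate a * adjugate C * adjugate h) := by
        simp only [adjugate_mul_distrib, Matrix.mul_assoc]
    _ = h.det • (adjugate a * (adjugate C * (C * c + D * a)) *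
          (adjugate a * adjugate C * adjugate h)) := by
        rw [hh]
        simp only [Matrix.mul_smul, Matrix.smul_mul, Matrix.mul_assoc]
    _ = h.det • (adjugate a * adjugate C * D * (a * adjugate a) * adjugate C * adjugate h) := by
        rw [hCC]
        simp only [Matrix.mul_assoc]
    _ = (h.det * a.det) • (adjugate a * (adjugate C * D * adjugate C) * adjugate h) := by
        rw [mul_adjugate]
        simp only [Matrix.mul_smul, Matrix.smul_mul, smul_smul, Matrix.mul_one, Matrix.mul_assoc]

open Classical in
theorem ShalikaRel.orbitType_eq {X Y : Matrix n (n ⊕ n) R} (hXY : ShalikaRel X Y) :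
    orbitType Y = orbitType X := by
  obtain ⟨C, D, rfl⟩ : ∃ C D, X = fromCols C D := ⟨_, _, (fromCols_toCols X).symm⟩
  obtain ⟨C', D', rfl⟩ : ∃ C' D', Y = fromCols C' D' := ⟨_, _, (fromCols_toCols Y).symm⟩
  obtain ⟨h, a, c, hh, ha, rfl, rfl⟩ := shalikaRel_fromCols_iff.1 hXY
  have hdh := (isUnit_iff_isUnit_det h).1 hh
  have hda := (isUnit_iff_isUnit_det a).1 ha
  have hadj {u : Matrix n n R} (hu : IsUnit u.det) : IsUnit (adjugate u) := by
    rw [isUnit_iff_isUnit_det, det_adjugate]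
    exact hu.pow _
  have hzero : h * C * a = 0 ↔ C = 0 := by rw [ha.mul_left_eq_zero, hh.mul_right_eq_zero]
  have hdet : (h * C * a).det = 0 ↔ C.det = 0 := by
    rw [det_mul, det_mul, hda.mul_left_eq_zero, hdh.mul_right_eq_zero]
  simp only [orbitType, toCols₁_fromCols, toCols₂_fromCols]
  by_cases hC : C.det = 0
  · have hsandwich : adjugate (h * C * a) * (h * C * c + h * D * a) * adjugate (h * C * a) = 0 ↔
        adjugate C * D * adjugate C = 0 := by
      rw [adjugate_sandwich_of_det_eq_zero hC, (hdh.mul hda).smul_eq_zero,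
        (hadj hdh).mul_left_eq_zero, (hadj hda).mul_right_eq_zero]
    exact if_congr (not_congr hdet) rfl (if_congr hzero rfl (if_congr hsandwich rfl rfl))
  · exact (if_pos (mt hdet.1 hC)).trans (if_pos hC).symm

open Classical in
theorem orbitType_eq_three_iff {X : Matrix n (n ⊕ n) R} : orbitType X = 3 ↔ X.toCols₁.det ≠ 0 := by
  unfold orbitType
  split_ifs <;> simp_all

end Invariants

section TwoByTwo

variable {K : Type*} [Field K]

def normalForm : Fin 4 → Matrix (Fin 2) (Fin 2 ⊕ Fin 2) K :=
  ![fromCols 0 1, fromCols !![0, 1; 0, 0] !![0, 0; 0, 1], fromCols !![1, 0; 0, 0] !![0, 0; 0, 1],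
    fromCols 1 0]

theorem orbitType_normalForm (i : Fin 4) : orbitType (normalForm (K := K) i) = i := by
  fin_cases i <;> simp [orbitType, normalForm, det_fin_two, adjugate_fin_two, ← Matrix.ext_iff,
    Fin.forall_fin_two]

theorem isUnit_of_det_ne_zero {n : Type*} [Fintype n] [DecidableEq n] {A : Matrix n n K}
    (h : A.det ≠ 0) : IsUnit A :=
  (isUnit_iff_isUnit_det A).2 h.isUnit

theorem exists_isUnit_eq_mul_mul_of_det_eq_zero {C : Matrix (Fin 2) (Fin 2) K} (hC : C ≠ 0)
    (hdet : C.det = 0) :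
    ∃ u v : Matrix (Fin 2) (Fin 2) K, IsUnit u ∧ IsUnit v ∧ C = u * !![1, 0; 0, 0] * v := by
  obtain ⟨i, j, hij⟩ : ∃ i j, C i j ≠ 0 := by
    by_contra! h
    exact hC (Matrix.ext h)
  rw [det_fin_two] at hdet
  fin_cases i <;> fin_cases j <;> simp only [Fin.zero_eta, Fin.mk_one] at hij <;>
  [refine ⟨!![C 0 0, 0; C 1 0, 1], !![1, C 0 1 / C 0 0; 0, 1], ?_, ?_, ?_⟩;
    refine ⟨!![C 0 1, 0; C 1 1, 1], !![C 0 0 / C 0 1, 1; 1, 0], ?_, ?_, ?_⟩;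
    refine ⟨!![C 0 0, 1; C 1 0, 0], !![1, C 1 1 / C 1 0; 0, 1], ?_, ?_, ?_⟩;
    refine ⟨!![C 0 1, 1; C 1 1, 0], !![C 1 0 / C 1 1, 1; 1, 0], ?_, ?_, ?_⟩]
  all_goals first
    | exact isUnit_of_det_ne_zero (by simp [det_fin_two_of, hij])
    | ext k l
      fin_cases k <;> fin_cases l <;> simp [Matrix.mul_apply, Fin.sum_univ_two]
      all_goals field_simp
      all_goals first | linear_combination hdet | linear_combination -hdet

open Classical in
theorem shalikaRel_normalForm_fromCols_diag_one_zero (N : Matrix (Fin 2) (Fin 2) K)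
    (hN : N 1 0 ≠ 0 ∨ N 1 1 ≠ 0) :
    ShalikaRel (normalForm (orbitType (fromCols !![1, 0; 0, 0] N)))
      (fromCols !![1, 0; 0, 0] N) := by
  have htype : orbitType (fromCols !![(1 : K), 0; 0, 0] N) = if N 1 1 = 0 then 1 else 2 := by
    simp [orbitType, det_fin_two, adjugate_fin_two_of, ← Matrix.ext_iff, Fin.forall_fin_two,
      vecMul, dotProduct, Matrix.mul_apply, Fin.sum_univ_two]
  rw [htype]
  split_ifs with h11
  · have h10 : N 1 0 ≠ 0 := hN.resolve_right (not_not.2 h11)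
    refine shalikaRel_fromCols_iff.2 ⟨!![(N 1 0)⁻¹, 0; 0, 1], !![0, 1; N 1 0, 0],
      !![0, 0; N 1 0 * N 0 0, N 1 0 * N 0 1], isUnit_of_det_ne_zero (by simp [det_fin_two_of, h10]),
      isUnit_of_det_ne_zero (by simp [det_fin_two_of, h10]), ?_, ?_⟩ <;>
    · ext k l
      fin_cases k <;> fin_cases l <;> simp [Matrix.mul_apply, Fin.sum_univ_two, h10, h11]
  · refine shalikaRel_fromCols_iff.2 ⟨1, !![1, 0; N 1 0, N 1 1], !![N 0 0, N 0 1; 0, 0],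
      isUnit_one, isUnit_of_det_ne_zero (by simp [det_fin_two_of, h11]), ?_, ?_⟩ <;>
    · ext k l
      fin_cases k <;> fin_cases l <;> simp [Matrix.mul_apply, Fin.sum_univ_two]

theorem shalikaRel_normalForm_orbitType (X : Matrix (Fin 2) (Fin 2 ⊕ Fin 2) K)
    (hX : Function.Injective X.vecMul) : ShalikaRel (normalForm (orbitType X)) X := by
  obtain ⟨C, D, rfl⟩ : ∃ C D, X = fromCols C D := ⟨_, _, (fromCols_toCols X).symm⟩
  by_cases hdet : C.det ≠ 0
  · have htype : orbitType (fromCols C D) = 3 := by simp [orbitType, hdet]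
    rw [htype]
    refine shalikaRel_fromCols_iff.2 ⟨C, 1, C⁻¹ * D, isUnit_of_det_ne_zero hdet, isUnit_one,
      by simp, ?_⟩
    simp [← Matrix.mul_assoc, mul_nonsing_inv _ hdet.isUnit]
  by_cases hC : C = 0
  · subst hC
    have htype : orbitType (fromCols (0 : Matrix (Fin 2) (Fin 2) K) D) = 0 := by simp [orbitType]
    have hD : IsUnit D := by
      rw [isUnit_iff_isUnit_det, isUnit_iff_ne_zero]
      intro hD
      obtain ⟨y, hy, hyD⟩ := exists_vecMul_eq_zero_iff.2 hD
      exact hy (hX (by simp [vecMul_fromCols, hyD]))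
    rw [htype]
    exact shalikaRel_fromCols_iff.2 ⟨D, 1, 0, hD, isUnit_one, by simp, by simp⟩
  obtain ⟨u, v, hu, hv, rfl⟩ := exists_isUnit_eq_mul_mul_of_det_eq_zero hC (not_not.1 hdet)
  set N := u⁻¹ * D * v⁻¹ with hN
  have hrel : ShalikaRel (fromCols !![1, 0; 0, 0] N) (fromCols (u * !![1, 0; 0, 0] * v) D) := by
    refine shalikaRel_fromCols_iff.2 ⟨u, v, 0, hu, hv, rfl, ?_⟩
    rw [Matrix.mul_zero, zero_add, hN, ← Matrix.mul_assoc u (u⁻¹ * D),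
      mul_nonsing_inv_cancel_left u D ((isUnit_iff_isUnit_det u).1 hu),
      nonsing_inv_mul_cancel_right v D ((isUnit_iff_isUnit_det v).1 hv)]
  have hN₁ : N 1 0 ≠ 0 ∨ N 1 1 ≠ 0 := by
    by_contra! hN₁
    have := hrel.injective_vecMul hX (a₁ := ![0, 1]) (a₂ := 0) (by
      ext (j | j) <;> fin_cases j <;> simp [vecMul, dotProduct, hN₁])
    simpa using congrFun this 1
  rw [hrel.orbitType_eq]
  exact (shalikaRel_normalForm_fromCols_diag_one_zero N hN₁).trans hrel

theorem shalikaRel_normalForm_iff {X : Matrix (Fin 2) (Fin 2 ⊕ Fin 2) K}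
    (hX : Function.Injective X.vecMul) (i : Fin 4) :
    ShalikaRel (normalForm i) X ↔ orbitType X = i := by
  constructor
  · intro h
    rw [h.orbitType_eq, orbitType_normalForm]
  · rintro rfl
    exact shalikaRel_normalForm_orbitType X hX

end TwoByTwo

section GL4

def blockGL (R : Type*) [CommRing R] : GL (Fin 4) R ≃* GL (Fin 2 ⊕ Fin 2) R :=
  Units.mapEquiv (reindexAlgEquiv R R (finSumFinEquiv : Fin 2 ⊕ Fin 2 ≃ Fin 4).symm).toMulEquiv

theorem coe_blockGL {R : Type*} [CommRing R] (g : GL (Fin 4) R) :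
    (blockGL R g : Matrix (Fin 2 ⊕ Fin 2) (Fin 2 ⊕ Fin 2) R) =
      reindex finSumFinEquiv.symm finSumFinEquiv.symm (g : Matrix (Fin 4) (Fin 4) R) :=
  rfl

theorem Pset_eq_preimage_blockGL : Pset = blockGL ℝ ⁻¹' blockParabolic (Fin 2) ℝ := by
  ext g
  simp [Pset, coe_blockGL, ← Matrix.ext_iff, toBlocks₂₁, Fin.forall_fin_succ]
  rfl

theorem Sset_eq_preimage_blockGL : Sset = blockGL ℝ ⁻¹' blockShalika (Fin 2) ℝ := by
  ext g
  simp [Sset, mem_blockShalika_iff, coe_blockGL, ← Matrix.ext_iff, toBlocks₂₁, toBlocks₁₁,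
    toBlocks₂₂, Fin.forall_fin_succ, funext_iff]
  rfl

theorem toRows₂_blockGL_w (i : Fin 4) :
    (blockGL ℝ (w i) : Matrix (Fin 2 ⊕ Fin 2) (Fin 2 ⊕ Fin 2) ℝ).toRows₂ = normalForm i := by
  fin_cases i <;> ext k (l | l) <;> fin_cases k <;> fin_cases l <;> rfl

theorem blockGL_w_three :
    (blockGL ℝ (w 3) : Matrix (Fin 2 ⊕ Fin 2) (Fin 2 ⊕ Fin 2) ℝ) = fromBlocks 0 1 1 0 := by
  ext (k | k) (l | l) <;> fin_cases k <;> fin_cases l <;> rfl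

theorem mem_doubleCoset_w_iff (i : Fin 4) (g : GL (Fin 4) ℝ) :
    g ∈ doubleCoset (w i) Pset Sset ↔
      orbitType (blockGL ℝ g : Matrix (Fin 2 ⊕ Fin 2) (Fin 2 ⊕ Fin 2) ℝ).toRows₂ = i := by
  rw [Pset_eq_preimage_blockGL, Sset_eq_preimage_blockGL, MulEquiv.mem_doubleCoset_preimage_iff,
    mem_doubleCoset_iff_shalikaRel, toRows₂_blockGL_w]
  exact shalikaRel_normalForm_iff (injective_vecMul_toRows₂ _) i

theorem isOpen_doubleCoset_w_three : IsOpen (doubleCoset (w 3) Pset Sset) := by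
  have hset : doubleCoset (w 3) Pset Sset =
      {g : GL (Fin 4) ℝ | ((g : Matrix (Fin 4) (Fin 4) ℝ).submatrix
      (fun i => finSumFinEquiv (Sum.inr i : Fin 2 ⊕ Fin 2))
      (fun j => finSumFinEquiv (Sum.inl j : Fin 2 ⊕ Fin 2))).det ≠ 0} := by
    ext g
    exact (mem_doubleCoset_w_iff 3 g).trans orbitType_eq_three_iff
  rw [hset]
  exact isOpen_ne_fun (Units.continuous_val.matrix_submatrix _ _).matrix_det continuous_const

theorem w_three_conj_mem_Pset_and_mem_Sset_iff (x : GL (Fin 4) ℝ) :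
    (w 3 * x * (w 3)⁻¹ ∈ Pset ∧ x ∈ Sset) ↔
      ∃ a : GL (Fin 2) ℝ, (x : Matrix (Fin 4) (Fin 4) ℝ) =
        Matrix.reindex finSumFinEquiv finSumFinEquiv
          (Matrix.fromBlocks (a : Matrix (Fin 2) (Fin 2) ℝ) 0 0
            (a : Matrix (Fin 2) (Fin 2) ℝ)) := by
  rw [Pset_eq_preimage_blockGL, Sset_eq_preimage_blockGL, Set.mem_preimage, Set.mem_preimage,
    map_mul, map_mul, map_inv,
    swap_conj_mem_blockParabolic_and_mem_blockShalika_iff _ _ blockGL_w_three]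
  simp only [coe_blockGL, ← Equiv.eq_symm_apply, reindex_symm, Equiv.symm_symm]

end GL4

/-- There are exactly four `S₄`-orbits on `X = P\GL₄(ℝ)` (`P` the
`(2,2)` parabolic, `S₄` the Shalika subgroup), represented by the permutation matrices of
`σ₁ = (1,2,3,4)`, `σ₂ = (1,3,2,4)`, `σ₃ = (3,1,2,4)`, `σ₄ = (3,4,1,2)`; the orbit of `σ₄`
is open; and the stabilizer `P^{σ₄} ∩ S₄` is `GL₂(ℝ)` embedded diagonally. -/
theorem shalika_orbits_GL4 :
    -- the four double cosets cover `GL₄(ℝ)`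
    (∀ g : GL (Fin 4) ℝ, ∃ i : Fin 4, ∃ p ∈ Pset, ∃ s ∈ Sset, g = p * w i * s) ∧
    -- the four orbits are pairwise distinct
    (∀ i j : Fin 4, (∃ p ∈ Pset, ∃ s ∈ Sset, w j = p * w i * s) → i = j) ∧
    -- the orbit of `σ₄` is open
    IsOpen {g : GL (Fin 4) ℝ | ∃ p ∈ Pset, ∃ s ∈ Sset, g = p * w 3 * s} ∧
    -- the stabilizer `P^{σ₄} ∩ S₄ ≅ GL₂(ℝ)` (diagonally embedded)
    (∀ x : GL (Fin 4) ℝ,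
      ((w 3 * x * (w 3)⁻¹ ∈ Pset) ∧ x ∈ Sset) ↔
        ∃ a : GL (Fin 2) ℝ, (x : Matrix (Fin 4) (Fin 4) ℝ) =
          Matrix.reindex finSumFinEquiv finSumFinEquiv
            (Matrix.fromBlocks (a : Matrix (Fin 2) (Fin 2) ℝ) 0 0
              (a : Matrix (Fin 2) (Fin 2) ℝ))) := by
  refine ⟨fun g => ?_, fun i j hij => ?_, ?_, w_three_conj_mem_Pset_and_mem_Sset_iff⟩
  · exact ⟨_, mem_doubleCoset.1 ((mem_doubleCoset_w_iff _ g).2 rfl)⟩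
  · have h := (mem_doubleCoset_w_iff i (w j)).1 (mem_doubleCoset.2 hij)
    rwa [toRows₂_blockGL_w, orbitType_normalForm, eq_comm] at h
  · convert isOpen_doubleCoset_w_three using 1
    exact Set.ext fun g => mem_doubleCoset.symm
end
end
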